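/- arXiv:2405.11148 — 9 statements merged into one kernel-verified Lean document; each statement's English description precedes it below -/
import Mathlib

section
/- Let X and Y be locally compact Hausdorff topological spaces and let T : C₀(X) → C₀(Y) be a lattice isomorphism. Then there exist a homeomorphism φ : Y → X and a continuous function a : Y → (0,∞) with 0 < inf a ≤ sup a < ∞ such that (T f)(y) = a(y) · f(φ(y)) for all f ∈ C₀(X) and all y ∈ Y. Moreover, the pair (a, φ) representing T in this fashion is unique. -/
/-!
For each `y`, `φ f := T f y` is a bounded linear functional preserving `max`, hence positive and
monotone. Call `x` null for `φ` if `φ` kills some `u ≥ 0` with `u ≥ 1` near `x`. By monotonicity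
and a finite subcover, `φ` kills every `f ≥ 0` supported in a compact set of null points, and
approximating by `(f - ε)⁺` extends this to every `f` vanishing at all non-null points. Since
`max (φ u) (φ v) = φ u + φ v` for `u, v ≥ 0` with disjoint supports, two distinct points cannot
both be non-null; as `φ ≠ 0` there is exactly one non-null point `x`, and `φ` vanishes on the
kernel of `δₓ`, so `φ = c • δₓ` with `c > 0`.

Hence `T f y = a y * f (σ y)` and likewise `T⁻¹ g x = b x * g (τ x)`. Since a weighted point
evaluation `f ↦ c * f x` with `c ≠ 0` determines `x` and `c`, composing the two gives `τ = σ⁻¹`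
and `a y * b (σ y) = 1`; bump functions then give continuity of `σ`, `τ`, `a` and the bounds
`a ≤ ‖T‖`, `b ≤ ‖T⁻¹‖`.
-/

open ZeroAtInfty Filter Topology Metric

noncomputable section

/-- Pointwise supremum of two continuous functions vanishing at infinity. -/
def c0sup {X : Type*} [TopologicalSpace X] (f g : C₀(X, ℝ)) : C₀(X, ℝ) where
  toFun := fun t => max (f t) (g t)
  continuous_toFun := (map_continuous f).max (map_continuous g)
  zero_at_infty' := by simpa using (zero_at_infty f).max (zero_at_infty g)

open Set

namespace ZeroAtInftyContinuousMap

variable {X : Type*} [TopologicalSpace X]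

@[simp] lemma c0sup_apply (f g : C₀(X, ℝ)) (x : X) : c0sup f g x = max (f x) (g x) := rfl

lemma c0sup_zero_sub_c0sup_neg_zero (f : C₀(X, ℝ)) : c0sup f 0 - c0sup (-f) 0 = f := by
  ext x
  simp only [sub_apply, c0sup_apply, zero_apply, neg_apply]
  rcases le_total (f x) 0 with h | h
  · rw [max_eq_right h, max_eq_left (neg_nonneg.2 h)]; ring
  · rw [max_eq_left h, max_eq_right (neg_nonpos.2 h)]; ring

lemma abs_apply_le_norm (f : C₀(X, ℝ)) (x : X) : |f x| ≤ ‖f‖ :=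
  f.toBCF.norm_coe_le_norm x

lemma norm_le_of_forall_abs_le {f : C₀(X, ℝ)} {C : ℝ} (hC : 0 ≤ C) (h : ∀ x, |f x| ≤ C) :
    ‖f‖ ≤ C :=
  (BoundedContinuousFunction.norm_le hC).2 h

def evalCLM (x : X) : C₀(X, ℝ) →L[ℝ] ℝ :=
  LinearMap.mkContinuous
    { toFun := fun f => f x
      map_add' := fun _ _ => rfl
      map_smul' := fun _ _ => rfl } 1
    fun f => by simpa using abs_apply_le_norm f x

@[simp] lemma evalCLM_apply (x : X) (f : C₀(X, ℝ)) : evalCLM x f = f x := rfl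

lemma sum_apply {ι : Type*} (s : Finset ι) (g : ι → C₀(X, ℝ)) (x : X) :
    (∑ i ∈ s, g i) x = ∑ i ∈ s, g i x :=
  map_sum (evalCLM x) g s

def cutoff (f : C₀(X, ℝ)) {ε : ℝ} (hε : 0 ≤ ε) : C₀(X, ℝ) where
  toFun := fun x => max (f x - ε) 0
  continuous_toFun := ((map_continuous f).sub continuous_const).max continuous_const
  zero_at_infty' := by
    simpa [max_eq_right (neg_nonpos.2 hε)] using
      ((zero_at_infty f).sub_const ε).max (tendsto_const_nhds (x := (0 : ℝ)))

@[simp] lemma cutoff_apply (f : C₀(X, ℝ)) {ε : ℝ} (hε : 0 ≤ ε) (x : X) :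
    cutoff f hε x = max (f x - ε) 0 := rfl

lemma norm_sub_cutoff_le {f : C₀(X, ℝ)} (hf : ∀ x, 0 ≤ f x) {ε : ℝ} (hε : 0 ≤ ε) :
    ‖f - cutoff f hε‖ ≤ ε := by
  refine norm_le_of_forall_abs_le hε fun x => ?_
  rw [sub_apply, cutoff_apply, abs_le]
  constructor <;> cases max_cases (f x - ε) 0 <;> linarith [hf x]

lemma isCompact_setOf_le (f : C₀(X, ℝ)) {ε : ℝ} (hε : 0 < ε) : IsCompact {x | ε ≤ f x} := by
  obtain ⟨K, hK, hKf⟩ := mem_cocompact.1 <| zero_at_infty f (Iio_mem_nhds hε)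
  refine hK.of_isClosed_subset (isClosed_le continuous_const (map_continuous f))
    fun x (hx : ε ≤ f x) => ?_
  by_contra hxK
  exact (hKf hxK).not_ge hx

variable [LocallyCompactSpace X] [T2Space X]

lemma exists_bump {x : X} {U : Set X} (hU : U ∈ 𝓝 x) :
    ∃ u : C₀(X, ℝ), (∀ z, u z ∈ Icc (0 : ℝ) 1) ∧ (∀ᶠ z in 𝓝 x, u z = 1) ∧ ∀ z ∉ U, u z = 0 := by
  obtain ⟨K, hKx, hKU, hK⟩ := local_compact_nhds (interior_mem_nhds.2 hU)
  obtain ⟨u, hu1, hu0, hcs, hu⟩ := exists_continuous_one_zero_of_isCompact hK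
    isOpen_interior.isClosed_compl (disjoint_compl_right_iff_subset.2 hKU)
  exact ⟨⟨u, hcs.is_zero_at_infty⟩, hu, Filter.mem_of_superset hKx fun z hz => hu1 hz,
    fun z hz => hu0 fun hz' => hz (interior_subset hz')⟩

end ZeroAtInftyContinuousMap

open ZeroAtInftyContinuousMap

section SupFunctional

variable {X : Type*} [TopologicalSpace X]

def PreservesC0Sup (φ : C₀(X, ℝ) →L[ℝ] ℝ) : Prop :=
  ∀ f g, φ (c0sup f g) = max (φ f) (φ g)

def IsNullNear (φ : C₀(X, ℝ) →L[ℝ] ℝ) (x : X) : Prop :=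
  ∃ u : C₀(X, ℝ), (∀ z, 0 ≤ u z) ∧ φ u = 0 ∧ ∀ᶠ z in 𝓝 x, 1 ≤ u z

namespace PreservesC0Sup

variable {φ : C₀(X, ℝ) →L[ℝ] ℝ} (hφ : PreservesC0Sup φ)
include hφ

lemma map_nonneg {f : C₀(X, ℝ)} (hf : ∀ x, 0 ≤ f x) : 0 ≤ φ f := by
  have hsup : c0sup f 0 = f := ext fun x => max_eq_left (hf x)
  rw [← hsup, hφ, map_zero]
  exact le_max_right _ _

lemma map_mono {f g : C₀(X, ℝ)} (h : ∀ x, f x ≤ g x) : φ f ≤ φ g := by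
  simpa using hφ.map_nonneg (f := g - f) fun x => sub_nonneg.2 (h x)

lemma eq_zero_or_eq_zero {u v : C₀(X, ℝ)} (hu : ∀ x, 0 ≤ u x) (hv : ∀ x, 0 ≤ v x)
    (huv : ∀ x, u x = 0 ∨ v x = 0) : φ u = 0 ∨ φ v = 0 := by
  have hsup : c0sup u v = u + v :=
    ext fun x => by rcases huv x with h | h <;> simp [h, hu x, hv x]
  have h := hφ u v
  rw [hsup, map_add] at h
  rcases max_choice (φ u) (φ v) with hmax | hmax <;> rw [hmax] at h
  · exact Or.inr (by linarith)
  · exact Or.inl (by linarith)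

lemma map_eq_zero_of_isCompact {f : C₀(X, ℝ)} (hf : ∀ x, 0 ≤ f x) {K : Set X} (hK : IsCompact K)
    (hfK : ∀ x ∉ K, f x = 0) (hnull : ∀ x ∈ K, IsNullNear φ x) : φ f = 0 := by
  choose! u hu0 hφu hu1 using hnull
  obtain ⟨t, htK, hKt⟩ := hK.elim_nhds_subcover (fun x => {z | 1 ≤ u x z}) hu1
  have hsum_nonneg : ∀ z, 0 ≤ ∑ x ∈ t, u x z :=
    fun z => Finset.sum_nonneg fun x hx => hu0 x (htK x hx) z
  have hle : ∀ z, f z ≤ (‖f‖ • ∑ x ∈ t, u x) z := by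
    intro z
    rw [ZeroAtInftyContinuousMap.smul_apply, smul_eq_mul,
      ZeroAtInftyContinuousMap.sum_apply]
    by_cases hz : z ∈ K
    · obtain ⟨x, hxt, hxz⟩ := mem_iUnion₂.1 (hKt hz)
      calc f z ≤ ‖f‖ * 1 := by simpa using (le_abs_self _).trans (abs_apply_le_norm f z)
        _ ≤ ‖f‖ * u x z := by gcongr; exact hxz
        _ ≤ ‖f‖ * ∑ x ∈ t, u x z := by
          gcongr
          exact Finset.single_le_sum (fun x hx => hu0 x (htK x hx) z) hxt
    · rw [hfK z hz]
      exact mul_nonneg (norm_nonneg f) (hsum_nonneg z)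
  refine le_antisymm ?_ (hφ.map_nonneg hf)
  calc φ f ≤ φ (‖f‖ • ∑ x ∈ t, u x) := hφ.map_mono hle
    _ = 0 := by
      rw [map_smul, map_sum, Finset.sum_eq_zero fun x hx => hφu x (htK x hx), smul_zero]

lemma map_eq_zero_of_nonneg {f : C₀(X, ℝ)} (hf : ∀ x, 0 ≤ f x)
    (hnull : ∀ x, 0 < f x → IsNullNear φ x) : φ f = 0 := by
  have hsmall : ∀ ε > 0, |φ f| ≤ ‖φ‖ * ε := by
    intro ε hε
    have hcut : φ (cutoff f hε.le) = 0 :=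
      hφ.map_eq_zero_of_isCompact (fun x => le_max_right _ _) (isCompact_setOf_le f hε)
        (fun x (hx : ¬ε ≤ f x) => max_eq_right (by linarith [not_le.1 hx]))
        fun x hx => hnull x (hε.trans_le hx)
    calc |φ f| = ‖φ (f - cutoff f hε.le)‖ := by rw [map_sub, hcut, sub_zero, Real.norm_eq_abs]
      _ ≤ ‖φ‖ * ‖f - cutoff f hε.le‖ := φ.le_opNorm _
      _ ≤ ‖φ‖ * ε := by gcongr; exact norm_sub_cutoff_le hf hε.le
  refine abs_nonpos_iff.1 (le_of_forall_pos_le_add fun ε hε => ?_)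
  calc |φ f| ≤ ‖φ‖ * (ε / (‖φ‖ + 1)) := hsmall _ (by positivity)
    _ ≤ 0 + ε := by
      rw [zero_add, mul_div_assoc', div_le_iff₀ (by positivity)]
      nlinarith [norm_nonneg φ]

lemma map_eq_zero_of_forall_isNullNear {f : C₀(X, ℝ)} (hnull : ∀ x, f x ≠ 0 → IsNullNear φ x) :
    φ f = 0 := by
  rw [← c0sup_zero_sub_c0sup_neg_zero f, map_sub]
  have hpos : ∀ g : C₀(X, ℝ), (∀ x, g x ≠ 0 → IsNullNear φ x) → φ (c0sup g 0) = 0 :=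
    fun g hg => hφ.map_eq_zero_of_nonneg (fun x => le_max_right _ _)
      fun x hx => hg x fun h => by simp [h] at hx
  rw [hpos f hnull, hpos (-f) fun x hx => hnull x (neg_ne_zero.1 hx), sub_zero]

variable [LocallyCompactSpace X] [T2Space X]

lemma isNullNear_of_ne {x₀ x : X} (hx₀ : ¬IsNullNear φ x₀) (hx : x ≠ x₀) : IsNullNear φ x := by
  obtain ⟨U, V, hU, hV, hxU, hx₀V, hUV⟩ := t2_separation hx
  obtain ⟨u, hu01, hu1, hu0⟩ := exists_bump (hU.mem_nhds hxU)
  obtain ⟨v, hv01, hv1, hv0⟩ := exists_bump (hV.mem_nhds hx₀V)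
  have hφv : φ v ≠ 0 := fun h => hx₀ ⟨v, fun z => (hv01 z).1, h, hv1.mono fun z hz => hz.ge⟩
  have huv : ∀ z, u z = 0 ∨ v z = 0 := fun z => by
    by_cases hz : z ∈ U
    · exact Or.inr (hv0 z (disjoint_left.1 hUV hz))
    · exact Or.inl (hu0 z hz)
  exact ⟨u, fun z => (hu01 z).1,
    (hφ.eq_zero_or_eq_zero (fun z => (hu01 z).1) (fun z => (hv01 z).1) huv).resolve_right hφv,
    hu1.mono fun z hz => hz.ge⟩

theorem exists_eq_mul_apply (hφ0 : φ ≠ 0) : ∃ x, ∃ c > 0, ∀ f, φ f = c * f x := by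
  obtain ⟨x₀, hx₀⟩ : ∃ x₀, ¬IsNullNear φ x₀ := by
    by_contra! h
    exact hφ0 (ContinuousLinearMap.ext fun f => hφ.map_eq_zero_of_forall_isNullNear fun x _ => h x)
  obtain ⟨e, he01, he1, -⟩ := exists_bump (univ_mem (f := 𝓝 x₀))
  have hrep : ∀ f, φ f = φ e * f x₀ := by
    intro f
    have h : φ (f - f x₀ • e) = 0 := hφ.map_eq_zero_of_forall_isNullNear fun x hx =>
      hφ.isNullNear_of_ne hx₀ fun hxx₀ => hx (by simp [hxx₀, he1.self_of_nhds])
    rw [map_sub, map_smul, smul_eq_mul, sub_eq_zero] at h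
    rw [h, mul_comm]
  refine ⟨x₀, φ e, (hφ.map_nonneg fun z => (he01 z).1).lt_of_ne' fun h => hφ0 ?_, hrep⟩
  ext f
  simp [hrep f, h]

end PreservesC0Sup

lemma eq_of_forall_mul_apply_eq [LocallyCompactSpace X] [T2Space X] {x x' : X} {c c' : ℝ}
    (hc : c ≠ 0) (h : ∀ f : C₀(X, ℝ), c * f x = c' * f x') : x = x' ∧ c = c' := by
  obtain rfl : x = x' := by
    by_contra hne
    obtain ⟨u, -, hu1, hu0⟩ := exists_bump (isOpen_compl_singleton.mem_nhds hne)
    simpa [hu1.self_of_nhds, hu0 x' (by simp), hc] using h u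
  obtain ⟨u, -, hu1, -⟩ := exists_bump (univ_mem (f := 𝓝 x))
  simpa [hu1.self_of_nhds] using h u

end SupFunctional

section WeightedComposition

variable {X Y : Type*} [TopologicalSpace X] [TopologicalSpace Y]

lemma exists_apply_ne_zero [LocallyCompactSpace Y] [T2Space Y] (T : C₀(X, ℝ) ≃L[ℝ] C₀(Y, ℝ))
    (y : Y) : ∃ f, T f y ≠ 0 := by
  obtain ⟨u, -, hu1, -⟩ := exists_bump (univ_mem (f := 𝓝 y))
  exact ⟨T.symm u, by simp [hu1.self_of_nhds]⟩

variable [LocallyCompactSpace X] [T2Space X] {σ : Y → X} {a : Y → ℝ}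

lemma exists_weight_of_map_c0sup (T : C₀(X, ℝ) →L[ℝ] C₀(Y, ℝ))
    (hT : ∀ f g, T (c0sup f g) = c0sup (T f) (T g)) (hne : ∀ y, ∃ f, T f y ≠ 0) :
    ∃ (σ : Y → X) (a : Y → ℝ), (∀ y, 0 < a y) ∧ ∀ f y, T f y = a y * f (σ y) := by
  have hrep : ∀ y, ∃ x, ∃ c > 0, ∀ f, T f y = c * f x := by
    intro y
    refine PreservesC0Sup.exists_eq_mul_apply (φ := (evalCLM y).comp T)
      (fun f g => by simp [hT]) fun h => ?_
    obtain ⟨f, hf⟩ := hne y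
    exact hf (by simpa using DFunLike.congr_fun h f)
  choose σ a ha hσa using hrep
  exact ⟨σ, a, ha, fun f y => hσa y f⟩

lemma continuous_of_apply_eq_mul_comp {T : C₀(X, ℝ) → C₀(Y, ℝ)}
    (hT : ∀ f y, T f y = a y * f (σ y)) (ha : ∀ y, a y ≠ 0) : Continuous σ := by
  refine continuous_iff_continuousAt.2 fun y U hU => ?_
  obtain ⟨u, -, hu1, hu0⟩ := exists_bump hU
  have hTu : {y' | T u y' ≠ 0} ∈ 𝓝 y :=
    (isOpen_ne_fun (map_continuous _) continuous_const).mem_nhds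
      (by simp [hT, hu1.self_of_nhds, ha y])
  exact mem_map.2 <| mem_of_superset hTu fun y' (hy' : T u y' ≠ 0) =>
    by_contra fun h => hy' (by simp [hT, hu0 _ h])

lemma continuous_weight_of_apply_eq_mul_comp {T : C₀(X, ℝ) → C₀(Y, ℝ)}
    (hT : ∀ f y, T f y = a y * f (σ y)) (hσ : Continuous σ) : Continuous a := by
  refine continuous_iff_continuousAt.2 fun y => ?_
  obtain ⟨u, -, hu1, -⟩ := exists_bump (univ_mem (f := 𝓝 (σ y)))
  refine (map_continuous (T u)).continuousAt.congr ?_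
  filter_upwards [(hσ.tendsto y).eventually hu1] with y' hy'
  simp [hT, hy']

lemma weight_le_opNorm {T : C₀(X, ℝ) →L[ℝ] C₀(Y, ℝ)} (hT : ∀ f y, T f y = a y * f (σ y))
    (y : Y) : a y ≤ ‖T‖ := by
  obtain ⟨u, hu01, hu1, -⟩ := exists_bump (univ_mem (f := 𝓝 (σ y)))
  have hu : ‖u‖ ≤ 1 := norm_le_of_forall_abs_le zero_le_one fun z =>
    abs_le.2 ⟨by linarith [(hu01 z).1], (hu01 z).2⟩
  calc a y = T u y := by simp [hT, hu1.self_of_nhds]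
    _ ≤ ‖T u‖ := (le_abs_self _).trans (abs_apply_le_norm _ _)
    _ ≤ ‖T‖ * ‖u‖ := T.le_opNorm u
    _ ≤ ‖T‖ := mul_le_of_le_one_right T.opNorm_nonneg hu

variable [LocallyCompactSpace Y] [T2Space Y]

theorem exists_homeomorph_of_map_c0sup (T : C₀(X, ℝ) ≃L[ℝ] C₀(Y, ℝ))
    (hT : ∀ f g, T (c0sup f g) = c0sup (T f) (T g)) :
    ∃ (e : Y ≃ₜ X) (a : Y → ℝ) (b : X → ℝ), (∀ y, 0 < a y) ∧ (∀ y, a y * b (e y) = 1) ∧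
      (∀ f y, T f y = a y * f (e y)) ∧ ∀ g x, T.symm g x = b x * g (e.symm x) := by
  have hS : ∀ f g, T.symm (c0sup f g) = c0sup (T.symm f) (T.symm g) :=
    fun f g => T.injective (by simp [hT])
  obtain ⟨σ, a, ha, hTa⟩ := exists_weight_of_map_c0sup (T : C₀(X, ℝ) →L[ℝ] C₀(Y, ℝ)) hT
    (exists_apply_ne_zero T)
  obtain ⟨τ, b, hb, hSb⟩ := exists_weight_of_map_c0sup (T.symm : C₀(Y, ℝ) →L[ℝ] C₀(X, ℝ)) hS
    (exists_apply_ne_zero T.symm)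
  simp only [ContinuousLinearEquiv.coe_coe] at hTa hSb
  have hστ : ∀ x, σ (τ x) = x ∧ b x * a (τ x) = 1 := fun x =>
    (eq_of_forall_mul_apply_eq (mul_pos (hb x) (ha (τ x))).ne' fun f => by
      rw [mul_assoc, ← hTa, ← hSb, T.symm_apply_apply, one_mul])
  have hτσ : ∀ y, τ (σ y) = y ∧ a y * b (σ y) = 1 := fun y =>
    (eq_of_forall_mul_apply_eq (mul_pos (ha y) (hb (σ y))).ne' fun g => by
      rw [mul_assoc, ← hSb, ← hTa, T.apply_symm_apply, one_mul])
  let e : Y ≃ₜ X :=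
    { toFun := σ
      invFun := τ
      left_inv := fun y => (hτσ y).1
      right_inv := fun x => (hστ x).1
      continuous_toFun := continuous_of_apply_eq_mul_comp hTa fun y => (ha y).ne'
      continuous_invFun := continuous_of_apply_eq_mul_comp hSb fun x => (hb x).ne' }
  exact ⟨e, a, b, ha, fun y => (hτσ y).2, hTa, hSb⟩

end WeightedComposition

/-- **Proposition 1.1.** Any lattice isomorphism `T : C₀(X) → C₀(Y)` (for `X`, `Y`
locally compact Hausdorff) is a weighted composition operator `T f = a · (f ∘ φ)`,
where `φ : Y → X` is a homeomorphism and `a : Y → (0, ∞)` is continuous with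
`0 < inf a ≤ sup a < ∞`; moreover the pair `(a, φ)` is unique. -/
theorem stmt0 {X Y : Type*} [TopologicalSpace X] [LocallyCompactSpace X] [T2Space X]
    [TopologicalSpace Y] [LocallyCompactSpace Y] [T2Space Y]
    (T : C₀(X, ℝ) ≃L[ℝ] C₀(Y, ℝ))
    (hT : ∀ f g : C₀(X, ℝ), T (c0sup f g) = c0sup (T f) (T g)) :
    ∃! p : (Y → ℝ) × (Y ≃ₜ X),
      Continuous p.1 ∧ (∃ c > 0, ∀ y, c ≤ p.1 y) ∧ (∃ C : ℝ, ∀ y, p.1 y ≤ C) ∧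
        ∀ (f : C₀(X, ℝ)) (y : Y), T f y = p.1 y * f (p.2 y) := by
  obtain ⟨e, a, b, ha, hab, hTa, hSb⟩ := exists_homeomorph_of_map_c0sup T hT
  set S : C₀(Y, ℝ) →L[ℝ] C₀(X, ℝ) := ↑T.symm
  have hb : ∀ x, b x ≤ ‖S‖ := weight_le_opNorm hSb
  refine ⟨(a, e), ⟨continuous_weight_of_apply_eq_mul_comp hTa e.continuous,
    ⟨1 / (‖S‖ + 1), by positivity, fun y => ?_⟩,
    ⟨_, weight_le_opNorm (T := (T : C₀(X, ℝ) →L[ℝ] C₀(Y, ℝ))) hTa⟩, hTa⟩, ?_⟩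
  · rw [div_le_iff₀ (by positivity)]
    calc 1 = a y * b (e y) := (hab y).symm
      _ ≤ a y * (‖S‖ + 1) := mul_le_mul_of_nonneg_left (by linarith [hb (e y)]) (ha y).le
  · rintro ⟨a', e'⟩ ⟨-, ⟨c, hc, hca⟩, -, hTa'⟩
    have h y := eq_of_forall_mul_apply_eq (hc.trans_le (hca y)).ne' fun f =>
      (hTa' f y).symm.trans (hTa f y)
    exact Prod.ext (funext fun y => (h y).2) (Homeomorph.ext fun y => (h y).1)

end
end

section
/- Let (X, d) be a locally compact metric space. For n ∈ ℕ let gₙ : C₀(X) → C₀(X) be lattice isomorphisms with supₙ ‖gₙ‖ < ∞, and let g be a lattice isomorphism; write gₙ f = a_{gₙ} · (f ∘ φ_{gₙ}) and g f = a_g · (f ∘ φ_g) for the unique weights and homeomorphisms representing them. If the family (φ_{gₙ}⁻¹)ₙ is equicontinuous on every compact subset of X and φ_{gₙ} → φ_g uniformly on every compact subset of X, then for every compact K ⊂ X and every ε > 0 there exists N ∈ ℕ such that d(φ_{gₙ}⁻¹(t), φ_g⁻¹(K)) ≤ ε for every t ∈ K and every n ≥ N. -/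
open ZeroAtInfty Filter Topology Metric

noncomputable section

/-- **Proposition 2.1, "moreover" part.** Let `(X, d)` be a locally compact metric space
and let `gₙ`, `g` be lattice isomorphisms of `C₀(X)` with `supₙ ‖gₙ‖ < ∞`, represented as
weighted composition operators with weights `aₙ`, `a` and homeomorphisms `φₙ`, `φ`.
If the family `(φₙ⁻¹)` is equicontinuous on every compact set, and `φₙ → φ` uniformly
on compact sets, then for every compact `K` and `ε > 0` there exists `N` such that
`d(φₙ⁻¹(t), φ⁻¹(K)) ≤ ε` for all `t ∈ K` and `n ≥ N`. -/
theorem stmt2 {X : Type*} [MetricSpace X] [LocallyCompactSpace X]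
    (gn : ℕ → C₀(X, ℝ) ≃L[ℝ] C₀(X, ℝ)) (g : C₀(X, ℝ) ≃L[ℝ] C₀(X, ℝ))
    (an : ℕ → X → ℝ) (a : X → ℝ) (φn : ℕ → X ≃ₜ X) (φ : X ≃ₜ X)
    (hrepn : ∀ (n : ℕ) (f : C₀(X, ℝ)) (t : X), gn n f t = an n t * f (φn n t))
    (hrep : ∀ (f : C₀(X, ℝ)) (t : X), g f t = a t * f (φ t))
    (hancont : ∀ n, Continuous (an n)) (hacont : Continuous a)
    (hanpos : ∀ n, ∃ c > 0, ∀ t, c ≤ an n t) (hapos : ∃ c > 0, ∀ t, c ≤ a t)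
    (hanbd : ∀ n, ∃ C : ℝ, ∀ t, an n t ≤ C) (habd : ∃ C : ℝ, ∀ t, a t ≤ C)
    (hbound : ∃ M : ℝ, ∀ n, ‖(gn n : C₀(X, ℝ) →L[ℝ] C₀(X, ℝ))‖ ≤ M)
    (h_equi : ∀ K : Set X, IsCompact K → ∀ ε > 0, ∃ δ > 0, ∀ x ∈ K, ∀ y ∈ K,
        dist x y < δ → ∀ n : ℕ, dist ((φn n).symm x) ((φn n).symm y) < ε)
    (h_unif : ∀ K : Set X, IsCompact K →
        TendstoUniformlyOn (fun n t => φn n t) (fun t => φ t) atTop K) :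
    ∀ K : Set X, IsCompact K → ∀ ε > 0, ∃ N : ℕ, ∀ n ≥ N, ∀ t ∈ K,
      infDist ((φn n).symm t) (φ.symm '' K) ≤ ε := by
  intro K hK ε hε
  -- compact superset L with K ⊆ interior L
  obtain ⟨L, hL, hKL⟩ := exists_compact_superset hK
  obtain ⟨r, hr, hthick⟩ := hK.exists_thickening_subset_open isOpen_interior hKL
  obtain ⟨δ, hδ, hδprop⟩ := h_equi L hL ε hε
  set δ' := min δ r with hδ'def
  have hδ' : 0 < δ' := lt_min hδ hr
  have hKφ : IsCompact (φ.symm '' K) := hK.image φ.symm.continuous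
  have := (Metric.tendstoUniformlyOn_iff.mp (h_unif _ hKφ)) δ' hδ'
  obtain ⟨N, hN⟩ := this.exists_forall_of_atTop
  refine ⟨N, fun n hn t ht => ?_⟩
  set s := φ.symm t with hs
  have hsK : s ∈ φ.symm '' K := ⟨t, ht, rfl⟩
  have hdist : dist (φ s) (φn n s) < δ' := hN n hn s hsK
  have hφs : φ s = t := φ.apply_symm_apply t
  have hxK : φn n s ∈ L := by
    have : φn n s ∈ Metric.thickening r K := by
      rw [Metric.mem_thickening_iff]
      exact ⟨t, ht, by rw [dist_comm]; calc dist t (φn n s) = dist (φ s) (φn n s) := by rw [hφs]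
        _ < δ' := hdist
        _ ≤ r := min_le_right _ _⟩
    exact interior_subset (hthick this)
  have htL : t ∈ L := interior_subset (hKL ht)
  have hlt : dist (φn n s) t < δ := by
    calc dist (φn n s) t = dist (φ s) (φn n s) := by rw [hφs, dist_comm]
      _ < δ' := hdist
      _ ≤ δ := min_le_left _ _
  have := hδprop _ hxK t htL hlt n
  rw [Homeomorph.symm_apply_apply] at this
  calc infDist ((φn n).symm t) (φ.symm '' K) ≤ dist ((φn n).symm t) s :=
        infDist_le_dist_of_mem hsK
    _ ≤ ε := by rw [dist_comm]; exact this.le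

end
end

section
/- Let X be a locally compact Polish space with a compatible metric d, and let G be a group of homeomorphisms of X such that the family {φ : φ ∈ G} is equicontinuous on every compact subset of X. For φₙ, φ ∈ G, the composition operators C_{φₙ} : C₀(X) → C₀(X), f ↦ f ∘ φₙ, converge in the strong operator topology to C_φ : f ↦ f ∘ φ if and only if φₙ(t) → φ(t) for every t ∈ X. -/
open ZeroAtInfty Filter Topology Metric

noncomputable section

/-- Composition operator `f ↦ f ∘ φ` on `C₀(X)` induced by a homeomorphism `φ`. -/
def compOp {X : Type*} [TopologicalSpace X] (φ : X ≃ₜ X) (f : C₀(X, ℝ)) : C₀(X, ℝ) where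
  toFun := fun t => f (φ t)
  continuous_toFun := (map_continuous f).comp φ.continuous
  zero_at_infty' := (zero_at_infty f).comp φ.map_cocompact.le

/-- Equicontinuity on compacts plus pointwise convergence gives uniform convergence on
compact sets. -/
lemma aux_unif {X : Type*} [MetricSpace X] (G : Set (X ≃ₜ X))
    (h_equi : ∀ K : Set X, IsCompact K → ∀ ε > 0, ∃ δ > 0,
      ∀ x ∈ K, ∀ y ∈ K, dist x y < δ → ∀ φ ∈ G, dist (φ x) (φ y) < ε)
    (φn : ℕ → X ≃ₜ X) (φ : X ≃ₜ X) (hφn : ∀ n, φn n ∈ G) (hφ : φ ∈ G)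
    (hpt : ∀ t : X, Tendsto (fun n => φn n t) atTop (𝓝 (φ t)))
    (K : Set X) (hK : IsCompact K) :
    ∀ ε > 0, ∀ᶠ n in atTop, ∀ x ∈ K, dist (φn n x) (φ x) < ε := by
  intro ε hε
  obtain ⟨δ, hδ, hδ'⟩ := h_equi K hK (ε / 3) (by linarith)
  obtain ⟨t, htK, htfin, hcov⟩ :=
    finite_approx_of_totallyBounded hK.totallyBounded δ hδ
  have hev : ∀ᶠ n in atTop, ∀ y ∈ t, dist (φn n y) (φ y) < ε / 3 := by
    rw [eventually_all_finite htfin]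
    intro y _
    exact Metric.tendsto_nhds.mp (hpt y) (ε / 3) (by linarith)
  filter_upwards [hev] with n hn x hx
  obtain ⟨y, hy, hxy⟩ := Set.mem_iUnion₂.mp (hcov hx)
  have hxy' : dist x y < δ := mem_ball.mp hxy
  have h1 : dist (φn n x) (φn n y) < ε / 3 := hδ' x hx y (htK hy) hxy' (φn n) (hφn n)
  have h2 : dist (φn n y) (φ y) < ε / 3 := hn y hy
  have h3 : dist (φ y) (φ x) < ε / 3 := hδ' y (htK hy) x hx (by rwa [dist_comm]) φ hφ
  calc dist (φn n x) (φ x) ≤ dist (φn n x) (φn n y) + dist (φn n y) (φ y) + dist (φ y) (φ x) :=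
        dist_triangle4 _ _ _ _
    _ < ε / 3 + ε / 3 + ε / 3 := by linarith
    _ = ε := by ring

/-- Pointwise convergence of inverses. -/
lemma aux_inv {X : Type*} [MetricSpace X] [LocallyCompactSpace X] (G : Set (X ≃ₜ X))
    (h_inv : ∀ φ ∈ G, φ.symm ∈ G)
    (h_equi : ∀ K : Set X, IsCompact K → ∀ ε > 0, ∃ δ > 0,
      ∀ x ∈ K, ∀ y ∈ K, dist x y < δ → ∀ φ ∈ G, dist (φ x) (φ y) < ε)
    (φn : ℕ → X ≃ₜ X) (φ : X ≃ₜ X) (hφn : ∀ n, φn n ∈ G)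
    (hpt : ∀ t : X, Tendsto (fun n => φn n t) atTop (𝓝 (φ t)))
    (s : X) : Tendsto (fun n => (φn n).symm s) atTop (𝓝 (φ.symm s)) := by
  set t := φ.symm s with ht
  have hs : s = φ t := by simp [ht]
  rw [Metric.tendsto_atTop]
  intro ε hε
  obtain ⟨K, hKc, hKn⟩ := exists_compact_mem_nhds (φ t)
  obtain ⟨δ, hδ, hδ'⟩ := h_equi K hKc ε hε
  have hev1 : ∀ᶠ n in atTop, φn n t ∈ K := (hpt t) hKn
  have hev2 : ∀ᶠ n in atTop, dist (φn n t) (φ t) < δ :=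
    Metric.tendsto_nhds.mp (hpt t) δ hδ
  obtain ⟨N, hN⟩ := (hev1.and hev2).exists_forall_of_atTop
  refine ⟨N, fun n hn => ?_⟩
  obtain ⟨h1, h2⟩ := hN n hn
  have := hδ' (φn n t) h1 (φ t) (mem_of_mem_nhds hKn) h2 (φn n).symm (h_inv _ (hφn n))
  simpa [hs, dist_comm] using this

lemma aux_point_le {X : Type*} [TopologicalSpace X] (g : C₀(X, ℝ)) (x : X) : ‖g x‖ ≤ ‖g‖ := by
  rw [← ZeroAtInftyContinuousMap.norm_toBCF_eq_norm]
  exact BoundedContinuousFunction.norm_coe_le_norm g.toBCF x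

lemma aux_norm_le {X : Type*} [TopologicalSpace X] (g : C₀(X, ℝ)) {M : ℝ} (hM : 0 ≤ M)
    (h : ∀ x, ‖g x‖ ≤ M) : ‖g‖ ≤ M := by
  rw [← ZeroAtInftyContinuousMap.norm_toBCF_eq_norm]
  exact (BoundedContinuousFunction.norm_le hM).mpr h

/-- **Lemma 2.4.** Let `X` be a locally compact Polish space (with compatible metric `d`)
and `G` a group of homeomorphisms of `X` which is equicontinuous on every compact subset.
For `φₙ, φ ∈ G`, the composition operators `C_{φₙ}` converge to `C_φ` in the strong
operator topology iff `φₙ → φ` pointwise on `X`. -/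
theorem stmt4 {X : Type*} [MetricSpace X] [PolishSpace X] [LocallyCompactSpace X]
    (G : Set (X ≃ₜ X)) (h_id : Homeomorph.refl X ∈ G)
    (h_comp : ∀ φ ∈ G, ∀ ψ ∈ G, φ.trans ψ ∈ G) (h_inv : ∀ φ ∈ G, φ.symm ∈ G)
    (h_equi : ∀ K : Set X, IsCompact K → ∀ ε > 0, ∃ δ > 0,
      ∀ x ∈ K, ∀ y ∈ K, dist x y < δ → ∀ φ ∈ G, dist (φ x) (φ y) < ε)
    (φn : ℕ → X ≃ₜ X) (φ : X ≃ₜ X) (hφn : ∀ n, φn n ∈ G) (hφ : φ ∈ G) :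
    (∀ f : C₀(X, ℝ),
        Tendsto (fun n => ‖compOp (φn n) f - compOp φ f‖) atTop (𝓝 0)) ↔
      ∀ t : X, Tendsto (fun n => φn n t) atTop (𝓝 (φ t)) := by
  constructor
  · -- SOT convergence implies pointwise convergence
    intro h t
    set c := φ t with hc
    obtain ⟨K, hKc, hKn⟩ := exists_compact_mem_nhds c
    obtain ⟨r, hr, hrK⟩ := Metric.nhds_basis_closedBall.mem_iff.mp hKn
    set f : C₀(X, ℝ) :=
      { toFun := fun y => max (1 - dist y c / r) 0
        continuous_toFun := by fun_prop
        zero_at_infty' := by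
          refine Tendsto.congr' ?_ tendsto_const_nhds
          have hKco : Kᶜ ∈ cocompact X := mem_cocompact.mpr ⟨K, hKc, subset_rfl⟩
          filter_upwards [hKco] with y hy
          have hyK : y ∉ closedBall c r := fun hm => hy (hrK hm)
          have hd : r < dist y c := by simpa [Metric.mem_closedBall] using hyK
          have h1 : 1 - dist y c / r ≤ 0 := by
            rw [sub_nonpos, le_div_iff₀ hr]; linarith
          exact (max_eq_right h1).symm } with hf
    have hfc : f c = 1 := by simp [hf]
    have hfval : ∀ y, f y = max (1 - dist y c / r) 0 := fun y => rfl
    have hconv : Tendsto (fun n => f (φn n t)) atTop (𝓝 1) := by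
      rw [show (1 : ℝ) = f c from hfc.symm, tendsto_iff_dist_tendsto_zero]
      refine squeeze_zero (fun n => dist_nonneg) (fun n => ?_) (h f)
      have hval : (compOp (φn n) f - compOp φ f) t = f (φn n t) - f c := rfl
      calc dist (f (φn n t)) (f c) = ‖f (φn n t) - f c‖ := by rw [Real.dist_eq, Real.norm_eq_abs]
        _ = ‖(compOp (φn n) f - compOp φ f) t‖ := by rw [hval]
        _ ≤ ‖compOp (φn n) f - compOp φ f‖ := aux_point_le _ _
    rw [Metric.tendsto_nhds]
    intro ε hε
    set ε' := min ε r with hε'def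
    have hε' : 0 < ε' := lt_min hε hr
    have hε'r : ε' ≤ r := min_le_right _ _
    have hev : ∀ᶠ n in atTop, dist (f (φn n t)) 1 < ε' / r :=
      Metric.tendsto_nhds.mp hconv (ε' / r) (by positivity)
    filter_upwards [hev] with n hn
    by_contra hlt
    push_neg at hlt
    have hd : ε' ≤ dist (φn n t) c := le_trans (min_le_left _ _) hlt
    have h2 : f (φn n t) ≤ 1 - ε' / r := by
      rw [hfval]
      apply max_le
      · have : ε' / r ≤ dist (φn n t) c / r := by gcongr
        linarith
      · have : ε' / r ≤ 1 := (div_le_one hr).mpr hε'r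
        linarith
    have h3 : 1 - ε' / r < f (φn n t) := by
      have := abs_lt.mp (by rwa [Real.dist_eq] at hn)
      linarith [this.1]
    linarith
  · -- pointwise convergence implies SOT convergence
    intro hpt f
    rw [Metric.tendsto_nhds]
    intro ε hε
    have hball := zero_at_infty f (Metric.ball_mem_nhds (0 : ℝ) (show (0:ℝ) < ε/4 by linarith))
    rw [mem_map, mem_cocompact] at hball
    obtain ⟨K, hKc, hKsub⟩ := hball
    have hsmall : ∀ x ∉ K, ‖f x‖ < ε / 4 := by
      intro x hx
      have := hKsub hx
      simpa [Real.norm_eq_abs, Real.dist_eq] using this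
    obtain ⟨δ₁, hδ₁, hδ₁'⟩ := Metric.uniformContinuous_iff.mp
      (ZeroAtInftyContinuousMap.uniformContinuous f) (ε / 2) (by linarith)
    set K₀ := φ.symm '' K with hK₀def
    have hK₀ : IsCompact K₀ := hKc.image φ.symm.continuous
    obtain ⟨L, hLc, hLint⟩ := exists_compact_superset hK₀
    obtain ⟨δ₀, hδ₀, hth⟩ := hK₀.exists_thickening_subset_open isOpen_interior hLint
    have hA := aux_unif G h_equi φn φ hφn hφ hpt L hLc δ₁ hδ₁
    have hinvpt : ∀ s : X, Tendsto (fun n => (φn n).symm s) atTop (𝓝 (φ.symm s)) :=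
      aux_inv G h_inv h_equi φn φ hφn hpt
    have hB := aux_unif G h_equi (fun n => (φn n).symm) φ.symm
      (fun n => h_inv _ (hφn n)) (h_inv _ hφ) hinvpt K hKc δ₀ hδ₀
    filter_upwards [hA, hB] with n hnA hnB
    rw [Real.dist_eq, sub_zero, abs_of_nonneg (norm_nonneg _)]
    have key : ∀ x, ‖(compOp (φn n) f - compOp φ f) x‖ ≤ ε / 2 := by
      intro x
      have hval : (compOp (φn n) f - compOp φ f) x = f (φn n x) - f (φ x) := rfl
      rw [hval]
      by_cases hx : x ∈ L
      · have hdist := hδ₁' (hnA x hx)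
        rw [Real.dist_eq] at hdist
        exact le_of_lt (by rw [Real.norm_eq_abs]; linarith)
      · have h1 : φ x ∉ K := fun hmem => hx (interior_subset (hLint ⟨φ x, hmem, by simp⟩))
        have h2 : φn n x ∉ K := by
          intro hmem
          have hd := hnB (φn n x) hmem
          refine hx (interior_subset (hth ?_))
          rw [Metric.mem_thickening_iff]
          exact ⟨φ.symm (φn n x), ⟨φn n x, hmem, rfl⟩, by simpa using hd⟩
        calc ‖f (φn n x) - f (φ x)‖ ≤ ‖f (φn n x)‖ + ‖f (φ x)‖ := norm_sub_le _ _
          _ ≤ ε / 4 + ε / 4 := add_le_add (hsmall _ h2).le (hsmall _ h1).le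
          _ = ε / 2 := by ring
    calc ‖compOp (φn n) f - compOp φ f‖ ≤ ε / 2 := aux_norm_le _ (by linarith) key
      _ < ε := by linarith

end
end

section
/- Let (Y, d) be a locally compact metric space and let G be a group of homeomorphisms of Y such that the family {φ : φ ∈ G} is equicontinuous on every compact subset of Y. For y ∈ Y let [y] denote the closure of the G-orbit {φ(y) : φ ∈ G}. Then for all s, t ∈ Y: [s] = [t] if and only if s ∈ [t]. -/
open Metric

lemma orbit_closure_subset {Y : Type*} [MetricSpace Y]
    (G : Set (Y ≃ₜ Y)) (h_comp : ∀ φ ∈ G, ∀ ψ ∈ G, φ.trans ψ ∈ G)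
    (a t : Y) (ha : a ∈ closure {z : Y | ∃ φ ∈ G, φ t = z}) :
    closure {z : Y | ∃ φ ∈ G, φ a = z} ⊆ closure {z : Y | ∃ φ ∈ G, φ t = z} := by
  apply closure_minimal _ isClosed_closure
  rintro _ ⟨φ, hφ, rfl⟩
  have h1 : φ a ∈ φ '' closure {z : Y | ∃ ψ ∈ G, ψ t = z} := ⟨a, ha, rfl⟩
  have h2 : φ '' closure {z : Y | ∃ ψ ∈ G, ψ t = z} ⊆
      closure (φ '' {z : Y | ∃ ψ ∈ G, ψ t = z}) :=
    image_closure_subset_closure_image φ.continuous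
  refine closure_mono ?_ (h2 h1)
  rintro _ ⟨_, ⟨ψ, hψ, rfl⟩, rfl⟩
  exact ⟨ψ.trans φ, h_comp ψ hψ φ hφ, rfl⟩

lemma mem_orbit_closure_symm {Y : Type*} [MetricSpace Y] [LocallyCompactSpace Y]
    (G : Set (Y ≃ₜ Y)) (h_inv : ∀ φ ∈ G, φ.symm ∈ G)
    (h_equi : ∀ K : Set Y, IsCompact K → ∀ ε > 0, ∃ δ > 0,
      ∀ x ∈ K, ∀ y ∈ K, dist x y < δ → ∀ φ ∈ G, dist (φ x) (φ y) < ε)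
    (a t : Y) (ha : a ∈ closure {z : Y | ∃ φ ∈ G, φ t = z}) :
    t ∈ closure {z : Y | ∃ φ ∈ G, φ a = z} := by
  rw [Metric.mem_closure_iff]
  intro ε hε
  obtain ⟨K, hKc, hKn⟩ := exists_compact_mem_nhds a
  obtain ⟨r, hr, hball⟩ := Metric.mem_nhds_iff.mp hKn
  obtain ⟨δ, hδ, hδ'⟩ := h_equi K hKc ε hε
  rw [Metric.mem_closure_iff] at ha
  obtain ⟨z, ⟨φ, hφ, rfl⟩, hdz⟩ := ha (min δ r) (lt_min hδ hr)
  have haK : a ∈ K := hball (mem_ball_self hr)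
  have hzK : φ t ∈ K := by
    apply hball
    rw [mem_ball, dist_comm]
    exact hdz.trans_le (min_le_right _ _)
  have := hδ' a haK (φ t) hzK (hdz.trans_le (min_le_left _ _)) φ.symm (h_inv φ hφ)
  refine ⟨φ.symm a, ⟨φ.symm, h_inv φ hφ, rfl⟩, ?_⟩
  rw [dist_comm]
  simpa using this

/-- **Lemma 3.1.** Let `(Y, d)` be a locally compact metric space and `G` a group of
homeomorphisms of `Y`, equicontinuous on every compact subset. Writing `[y]` for the
closure of the `G`-orbit of `y`, one has `[s] = [t]` iff `s ∈ [t]`. -/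
theorem stmt5 {Y : Type*} [MetricSpace Y] [LocallyCompactSpace Y]
    (G : Set (Y ≃ₜ Y)) (h_id : Homeomorph.refl Y ∈ G)
    (h_comp : ∀ φ ∈ G, ∀ ψ ∈ G, φ.trans ψ ∈ G) (h_inv : ∀ φ ∈ G, φ.symm ∈ G)
    (h_equi : ∀ K : Set Y, IsCompact K → ∀ ε > 0, ∃ δ > 0,
      ∀ x ∈ K, ∀ y ∈ K, dist x y < δ → ∀ φ ∈ G, dist (φ x) (φ y) < ε)
    (s t : Y) :
    closure {z : Y | ∃ φ ∈ G, φ s = z} = closure {z : Y | ∃ φ ∈ G, φ t = z} ↔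
      s ∈ closure {z : Y | ∃ φ ∈ G, φ t = z} := by
  constructor
  · intro h
    rw [← h]
    exact subset_closure ⟨Homeomorph.refl Y, h_id, rfl⟩
  · intro hs
    have hts := mem_orbit_closure_symm G h_inv h_equi s t hs
    exact le_antisymm (orbit_closure_subset G h_comp s t hs)
      (orbit_closure_subset G h_comp t s hts)
end

section
/- Let X be a locally compact Polish space with compatible metric d, let G be a group of homeomorphisms of X that is equicontinuous on every compact subset of X, and let N be a norm on C₀(X), equivalent to the supremum norm, such that N(f ∘ φ) = N(f) for all f ∈ C₀(X) and all φ ∈ G. Let n ∈ ℕ and let t = (t₁, …, tₙ) and s = (s₁, …, sₙ) in Xⁿ be such that the closures in Xⁿ of the coordinatewise G-orbits {(φ(t₁), …, φ(tₙ)) : φ ∈ G} and {(φ(s₁), …, φ(sₙ)) : φ ∈ G} coincide. Then for all β₁, …, βₙ ∈ ℝ, the dual norms with respect to N of the functionals Σₖ βₖ δ_{tₖ} and Σₖ βₖ δ_{sₖ} on C₀(X) are equal, i.e. sup{|Σₖ βₖ x(tₖ)| : N(x) ≤ 1} = sup{|Σₖ βₖ x(sₖ)| : N(x) ≤ 1}.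 -/
open ZeroAtInfty Filter Topology Metric

noncomputable section

/-- **Lemma 4.5 (limits of atoms).** Let `X` be a locally compact Polish space, `G` a
group of homeomorphisms of `X` equicontinuous on compact sets, and `N` a `G`-invariant
norm on `C₀(X)` equivalent to the sup norm. If the `G`-orbits of `t, s ∈ Xⁿ` have the
same closure, then for all scalars `β₁, …, βₙ` the dual norms (w.r.t. `N`) of
`Σ βₖ δ_{tₖ}` and `Σ βₖ δ_{sₖ}` coincide. -/
theorem stmt8 {X : Type*} [MetricSpace X] [PolishSpace X] [LocallyCompactSpace X]
    (G : Set (X ≃ₜ X)) (h_id : Homeomorph.refl X ∈ G)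
    (h_comp : ∀ φ ∈ G, ∀ ψ ∈ G, φ.trans ψ ∈ G) (h_inv : ∀ φ ∈ G, φ.symm ∈ G)
    (h_equi : ∀ K : Set X, IsCompact K → ∀ ε > 0, ∃ δ > 0,
      ∀ x ∈ K, ∀ y ∈ K, dist x y < δ → ∀ φ ∈ G, dist (φ x) (φ y) < ε)
    (N : C₀(X, ℝ) → ℝ)
    (hN_tri : ∀ x y : C₀(X, ℝ), N (x + y) ≤ N x + N y)
    (hN_smul : ∀ (c : ℝ) (x : C₀(X, ℝ)), N (c • x) = |c| * N x)
    (hN_equiv : ∃ c > 0, ∃ C : ℝ, ∀ x : C₀(X, ℝ), c * ‖x‖ ≤ N x ∧ N x ≤ C * ‖x‖)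
    (hN_inv : ∀ φ ∈ G, ∀ f : C₀(X, ℝ), N (compOp φ f) = N f)
    (n : ℕ) (t s : Fin n → X)
    (h_orb : closure {u : Fin n → X | ∃ φ ∈ G, (fun k => φ (t k)) = u}
           = closure {u : Fin n → X | ∃ φ ∈ G, (fun k => φ (s k)) = u}) :
    ∀ β : Fin n → ℝ,
      sSup {r : ℝ | ∃ x : C₀(X, ℝ), N x ≤ 1 ∧ r = |∑ k, β k * x (t k)|} =
        sSup {r : ℝ | ∃ x : C₀(X, ℝ), N x ≤ 1 ∧ r = |∑ k, β k * x (s k)|} := by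
  intro β
  obtain ⟨c, hc, C, hcC⟩ := hN_equiv
  -- the family of sets
  set S : (Fin n → X) → Set ℝ := fun u =>
    {r : ℝ | ∃ x : C₀(X, ℝ), N x ≤ 1 ∧ r = |∑ k, β k * x (u k)|} with hS
  have hN0 : N 0 = 0 := by
    have := hN_smul 0 0
    simpa using this
  -- zero membership
  have hzero : ∀ u, (0 : ℝ) ∈ S u := by
    intro u
    exact ⟨0, by simp [hN0], by simp⟩
  -- pointwise bound
  have hptle : ∀ (x : C₀(X, ℝ)) (a : X), |x a| ≤ ‖x‖ := by
    intro x a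
    have := x.toBCF.norm_coe_le_norm a
    rwa [ZeroAtInftyContinuousMap.norm_toBCF_eq_norm, Real.norm_eq_abs] at this
  -- bddAbove
  have hbdd : ∀ u, BddAbove (S u) := by
    intro u
    refine ⟨(∑ k, |β k|) * (1 / c), ?_⟩
    rintro r ⟨x, hx, rfl⟩
    have hxnorm : ‖x‖ ≤ 1 / c := by
      rw [le_div_iff₀ hc, mul_comm]
      exact le_trans (hcC x).1 hx
    calc |∑ k, β k * x (u k)| ≤ ∑ k, |β k * x (u k)| := Finset.abs_sum_le_sum_abs _ _
      _ ≤ ∑ k, |β k| * (1 / c) := by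
          refine Finset.sum_le_sum fun k _ => ?_
          rw [abs_mul]
          exact mul_le_mul_of_nonneg_left (le_trans (hptle x (u k)) hxnorm) (abs_nonneg _)
      _ = (∑ k, |β k|) * (1 / c) := by rw [Finset.sum_mul]
  -- invariance: one inclusion
  have hincl : ∀ u : Fin n → X, ∀ φ ∈ G, S (fun k => φ (u k)) ⊆ S u := by
    intro u φ hφ r hr
    obtain ⟨x, hx, rfl⟩ := hr
    exact ⟨compOp φ x, by rw [hN_inv φ hφ]; exact hx, rfl⟩
  have hSeq : ∀ u : Fin n → X, ∀ φ ∈ G, S (fun k => φ (u k)) = S u := by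
    intro u φ hφ
    refine le_antisymm (hincl u φ hφ) ?_
    have := hincl (fun k => φ (u k)) φ.symm (h_inv φ hφ)
    simpa using this
  -- main one-sided estimate
  have main : ∀ a b : Fin n → X,
      a ∈ closure {u : Fin n → X | ∃ φ ∈ G, (fun k => φ (b k)) = u} →
      sSup (S a) ≤ sSup (S b) := by
    intro a b hab
    have h0le : (0 : ℝ) ≤ sSup (S b) := le_csSup (hbdd b) (hzero b)
    refine Real.sSup_le ?_ h0le
    rintro r ⟨x, hx, rfl⟩
    obtain ⟨u, hu, hlim⟩ := mem_closure_iff_seq_limit.mp hab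
    have hcont : Continuous fun v : Fin n → X => |∑ k, β k * x (v k)| := by
      exact (continuous_finset_sum _ fun k _ =>
        continuous_const.mul ((map_continuous x).comp (continuous_apply k))).abs
    have htend : Tendsto (fun j => |∑ k, β k * x (u j k)|) atTop
        (𝓝 |∑ k, β k * x (a k)|) := (hcont.tendsto a).comp hlim
    refine le_of_tendsto htend (Eventually.of_forall fun j => ?_)
    obtain ⟨φ, hφ, hφu⟩ := hu j
    have hmem : |∑ k, β k * x (u j k)| ∈ S b := by
      rw [← hSeq b φ hφ, ← hφu]
      exact ⟨x, hx, rfl⟩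
    exact le_csSup (hbdd b) hmem
  have ht : t ∈ closure {u : Fin n → X | ∃ φ ∈ G, (fun k => φ (s k)) = u} := by
    rw [← h_orb]
    exact subset_closure ⟨Homeomorph.refl X, h_id, rfl⟩
  have hs : s ∈ closure {u : Fin n → X | ∃ φ ∈ G, (fun k => φ (t k)) = u} := by
    rw [h_orb]
    exact subset_closure ⟨Homeomorph.refl X, h_id, rfl⟩
  exact le_antisymm (main t s ht) (main s t hs)

end
end

section
/- Let n ≥ 2, let 1.1 ≥ C > λ₁ > λ₂ > … > λₙ > 1 be real numbers, and let ζ_{ij} (1 ≤ i < j ≤ n) be real numbers with 0 ≤ ζ_{ij} ≤ 9^{4−3j}. Let 𝒯 be the upper triangular n × n matrix with diagonal entries 𝒯_{ii} = λᵢ, entries 𝒯_{ij} = ζ_{ij} for i < j, and 𝒯_{ij} = 0 for i > j. Then the equation 𝒯 z = 𝟏 (where 𝟏 = (1, …, 1)) has a unique solution z₀ = (z₀₁, …, z₀ₙ), and 4/5 ≤ z₀ₖ ≤ 1 for every k ∈ {1, …, n}. -/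
private lemma geo_aux (n : ℕ) : ∑ i ∈ Finset.range n, ((1:ℝ)/81)^i ≤ 81/80 := by
  induction n with
  | zero => simp; norm_num
  | succ n ih =>
    rw [geom_sum_succ]
    nlinarith [ih]

private lemma zeta_bound (m : ℕ) (hm : 1 ≤ m) :
    (9 : ℝ) ^ ((4 : ℤ) - 3 * ((m : ℕ) + 1)) ≤ ((1:ℝ)/81) ^ m := by
  have h1 : ((1:ℝ)/81) ^ m = (9:ℝ) ^ ((-2 : ℤ) * m) := by
    rw [zpow_mul]
    norm_num
  rw [h1]
  apply zpow_le_zpow_right₀ (by norm_num : (1:ℝ) ≤ 9)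
  omega

/-- **Lemma 4.7, first part.** Let `n ≥ 2`, `1.1 ≥ C > λ₁ > … > λₙ > 1`, and
`0 ≤ ζ_{ij} ≤ 9^{4−3j}` for `1 ≤ i < j ≤ n`. If `𝒯` is the upper triangular matrix with
diagonal `λᵢ` and strictly-upper entries `ζ_{ij}`, then the equation `𝒯 z = 𝟏` has a
unique solution `z₀`, and `4/5 ≤ z₀ₖ ≤ 1` for every coordinate `k`.
(Indices are shifted: Lean index `j : Fin n` corresponds to paper index `j + 1`.) -/
theorem stmt10 (n : ℕ) (hn : 2 ≤ n) (C : ℝ) (lam : Fin n → ℝ) (ζ : Fin n → Fin n → ℝ)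
    (hC : C ≤ 1.1) (hlamC : ∀ i, lam i < C) (hanti : StrictAnti lam)
    (hlam : ∀ i, 1 < lam i)
    (hζ : ∀ i j : Fin n, i < j →
      0 ≤ ζ i j ∧ ζ i j ≤ (9 : ℝ) ^ ((4 : ℤ) - 3 * ((j : ℕ) + 1)))
    (𝒯 : Matrix (Fin n) (Fin n) ℝ)
    (h𝒯 : ∀ i j : Fin n, 𝒯 i j = if i = j then lam i else if i < j then ζ i j else 0) :
    (∃! z : Fin n → ℝ, 𝒯.mulVec z = fun _ => 1) ∧
      ∀ z : Fin n → ℝ, (𝒯.mulVec z = fun _ => 1) →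
        ∀ k, 4 / 5 ≤ z k ∧ z k ≤ 1 := by
  haveI : NeZero n := ⟨by omega⟩
  -- the bounds part
  have key : ∀ z : Fin n → ℝ, (𝒯.mulVec z = fun _ => 1) →
      ∀ k, 4 / 5 ≤ z k ∧ z k ≤ 1 := by
    intro z hz
    suffices H : ∀ m : ℕ, ∀ k : Fin n, n - (k : ℕ) ≤ m → 4/5 ≤ z k ∧ z k ≤ 1 by
      intro k; exact H n k (by omega)
    intro m
    induction m with
    | zero => intro k hk; exfalso; have := k.isLt; omega
    | succ m ih =>
      intro k hk
      have hrow : ∑ j, 𝒯 k j * z j = 1 := by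
        have := congrFun hz k
        simpa [Matrix.mulVec, dotProduct] using this
      set s : Finset (Fin n) := Finset.univ.filter (fun j => k < j) with hs
      have hsub : s ⊆ Finset.univ.erase k := by
        intro j hj
        simp only [hs, Finset.mem_filter] at hj
        exact Finset.mem_erase.2 ⟨(ne_of_lt hj.2).symm, Finset.mem_univ j⟩
      have hsplit : lam k * z k + ∑ j ∈ s, 𝒯 k j * z j = 1 := by
        have h1 : ∑ j ∈ Finset.univ.erase k, 𝒯 k j * z j = ∑ j ∈ s, 𝒯 k j * z j := by
          refine (Finset.sum_subset hsub ?_).symm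
          intro j hjer hjs
          simp only [hs, Finset.mem_filter, Finset.mem_univ, true_and, not_lt] at hjs
          have hjk : j ≠ k := (Finset.mem_erase.1 hjer).1
          rw [h𝒯]
          rw [if_neg (fun h => hjk h.symm), if_neg (fun h => absurd h (not_lt.2 hjs))]
          ring
        have h2 := Finset.add_sum_erase Finset.univ (fun j => 𝒯 k j * z j)
          (Finset.mem_univ k)
        rw [h1] at h2
        have h3 : 𝒯 k k = lam k := by rw [h𝒯]; simp
        rw [← hrow, ← h2]
        rw [h3]
      -- induction hypothesis for each j > k
      have hIH : ∀ j ∈ s, 4/5 ≤ z j ∧ z j ≤ 1 := by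
        intro j hj
        simp only [hs, Finset.mem_filter] at hj
        have hkj : (k : ℕ) < (j : ℕ) := hj.2
        exact ih j (by omega)
      have hT : ∀ j ∈ s, 0 ≤ 𝒯 k j ∧ 𝒯 k j ≤ ((1:ℝ)/81) ^ (j : ℕ) := by
        intro j hj
        simp only [hs, Finset.mem_filter] at hj
        have hkj := hj.2
        have hTζ : 𝒯 k j = ζ k j := by
          rw [h𝒯, if_neg (ne_of_lt hkj), if_pos hkj]
        have hzb := hζ k j hkj
        have hj1 : 1 ≤ (j : ℕ) := by
          have : (k : ℕ) < (j : ℕ) := hkj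
          omega
        exact ⟨hTζ ▸ hzb.1, hTζ ▸ (hzb.2.trans (zeta_bound _ hj1))⟩
      have hS0 : 0 ≤ ∑ j ∈ s, 𝒯 k j * z j := by
        apply Finset.sum_nonneg
        intro j hj
        have h1 := (hT j hj).1
        have h2 := (hIH j hj).1
        nlinarith
      have hS1 : ∑ j ∈ s, 𝒯 k j * z j ≤ 1/80 := by
        calc ∑ j ∈ s, 𝒯 k j * z j ≤ ∑ j ∈ s, ((1:ℝ)/81) ^ (j : ℕ) := by
              apply Finset.sum_le_sum
              intro j hj
              have h1 := (hT j hj).1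
              have h2 := (hT j hj).2
              have h3 := (hIH j hj).1
              have h4 := (hIH j hj).2
              nlinarith
          _ ≤ ∑ j ∈ Finset.univ.erase (0 : Fin n), ((1:ℝ)/81) ^ (j : ℕ) := by
              apply Finset.sum_le_sum_of_subset_of_nonneg
              · intro j hj
                simp only [hs, Finset.mem_filter] at hj
                have : (k : ℕ) < (j : ℕ) := hj.2
                refine Finset.mem_erase.2 ⟨?_, Finset.mem_univ j⟩
                intro h
                rw [h] at this
                simp at this
              · intro j _ _; positivity
          _ = (∑ j : Fin n, ((1:ℝ)/81) ^ (j : ℕ)) - 1 := by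
              rw [Finset.sum_erase_eq_sub (Finset.mem_univ 0)]
              norm_num
          _ = (∑ i ∈ Finset.range n, ((1:ℝ)/81) ^ i) - 1 := by
              rw [Fin.sum_univ_eq_sum_range]
          _ ≤ 81/80 - 1 := by linarith [geo_aux n]
          _ = 1/80 := by norm_num
      have hl1 := hlam k
      have hlC := (hlamC k).le.trans hC
      norm_num at hlC
      constructor
      · nlinarith [hsplit, hS1, hl1, hlC]
      · nlinarith [hsplit, hS0, hl1]
  -- invertibility
  have hBT : 𝒯.BlockTriangular id := by
    intro i j hji
    have hji' : j < i := hji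
    rw [h𝒯, if_neg (ne_of_gt hji'), if_neg (not_lt.2 hji'.le)]
  have hdet : 𝒯.det = ∏ i, lam i := by
    rw [Matrix.det_of_upperTriangular hBT]
    apply Finset.prod_congr rfl
    intro i _
    rw [h𝒯]; simp
  have hdetu : IsUnit 𝒯.det := by
    rw [hdet, isUnit_iff_ne_zero, Finset.prod_ne_zero_iff]
    intro i _
    exact ne_of_gt (lt_trans one_pos (hlam i))
  refine ⟨⟨𝒯⁻¹.mulVec (fun _ => 1), ?_, ?_⟩, key⟩
  · show 𝒯.mulVec (𝒯⁻¹.mulVec fun _ => 1) = fun _ => 1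
    rw [Matrix.mulVec_mulVec, Matrix.mul_nonsing_inv _ hdetu, Matrix.one_mulVec]
  · intro y hy
    have : 𝒯⁻¹.mulVec (𝒯.mulVec y) = 𝒯⁻¹.mulVec (fun _ => 1) := by rw [hy]
    rwa [Matrix.mulVec_mulVec, Matrix.nonsing_inv_mul _ hdetu, Matrix.one_mulVec] at this
end

section
/- Let n ≥ 2, let 1.1 ≥ C > λ₁ > λ₂ > … > λₙ > 1 be real numbers, and let ζ_{ij} (1 ≤ i < j ≤ n) be real numbers with 0 ≤ ζ_{ij} ≤ 9^{4−3j}. For 1 ≤ i ≤ n let zᵢ* = (0, …, 0, λᵢ, ζ_{i,i+1}, …, ζ_{in}) ∈ ℝⁿ (with i − 1 leading zeros), let 𝒯 be the n × n matrix with rows z₁*, …, zₙ*, and let z₀ ∈ ℝⁿ be the unique solution of 𝒯 z = 𝟏. Suppose Z is ℝⁿ equipped with a norm ‖·‖ such that ‖z₀‖ = zᵢ*·z₀ and ‖zᵢ*‖* ≤ 1 for every i ∈ {1, …, n}, where ‖·‖* is the dual norm under the standard pairing. Then every z* = (β₁, …, βₙ) ∈ ℝⁿ with max_k |1 − βₖ|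 ≤ 1/5 satisfies ‖z*‖* = z*·z₀. -/
/-!
Write `β = ∑ cᵢ zᵢ*` as a combination of the rows of `𝒯`. Because `𝒯` is upper
triangular with diagonal `λⱼ ≥ 1` and tiny off-diagonal entries, forward substitution keeps
every `cⱼ` in `[0, 6/5]`. Each row has dual norm at most `1` and pairs to `1` with `z₀`, so for
`‖z‖ ≤ 1` we get `β·z = ∑ cᵢ (zᵢ*·z) ≤ ∑ cᵢ = β·z₀`, with equality at `z = z₀` (`‖z₀‖ = 1`).
Since `sSup` of a set that is not bounded above is `0`, the hypothesis on the rows' dual norms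
carries information only because `N` dominates a positive multiple of the sup norm, by
compactness of the unit sphere.
-/

open Matrix Finset

namespace Seminorm

variable {ι : Type*} [Fintype ι]

theorem le_sum_single_mul_norm [DecidableEq ι] (p : Seminorm ℝ (ι → ℝ)) (z : ι → ℝ) :
    p z ≤ (∑ k, p (Pi.single k 1)) * ‖z‖ := by
  calc p z = p (∑ k, z k • Pi.single k (1 : ℝ)) := by
        congr 1; ext j; simp [Pi.single_apply]
    _ ≤ ∑ k, p (z k • Pi.single k (1 : ℝ)) :=
        le_sum_of_subadditive p (map_zero p).le (map_add_le_add p) _ _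
    _ ≤ ∑ k, ‖z‖ * p (Pi.single k 1) := by
        gcongr with k
        rw [map_smul_eq_mul]
        gcongr
        exact norm_le_pi_norm z k
    _ = (∑ k, p (Pi.single k 1)) * ‖z‖ := by rw [← mul_sum, mul_comm]

theorem continuous_pi (p : Seminorm ℝ (ι → ℝ)) : Continuous p := by
  classical
  refine (LipschitzWith.of_dist_le_mul (K := (∑ k, p (Pi.single k 1)).toNNReal)
    fun x y => ?_).continuous
  rw [Real.dist_eq, dist_eq_norm, Real.coe_toNNReal _ (by positivity)]
  exact (abs_sub_map_le_sub p x y).trans (p.le_sum_single_mul_norm _)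

theorem exists_pos_mul_norm_le [Nonempty ι] (p : Seminorm ℝ (ι → ℝ))
    (hp : ∀ z, z ≠ 0 → 0 < p z) : ∃ m > 0, ∀ z, m * ‖z‖ ≤ p z := by
  obtain ⟨u, hu, hmin⟩ := (isCompact_sphere (0 : ι → ℝ) 1).exists_isMinOn
    (NormedSpace.sphere_nonempty.mpr zero_le_one) p.continuous_pi.continuousOn
  have hu1 : ‖u‖ = 1 := by simpa using hu
  refine ⟨p u, hp u (norm_ne_zero_iff.mp (by simp [hu1])), fun z => ?_⟩
  rcases eq_or_ne z 0 with rfl | hz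
  · simp
  have hz' : ‖z‖ ≠ 0 := norm_ne_zero_iff.mpr hz
  calc p u * ‖z‖ ≤ p (‖z‖⁻¹ • z) * ‖z‖ := by
        gcongr
        exact hmin (by simp [norm_smul, hz'])
    _ = p z := by
        rw [map_smul_eq_mul, norm_inv, norm_norm, mul_comm, ← mul_assoc, mul_inv_cancel₀ hz',
          one_mul]

theorem bddAbove_dotProduct [Nonempty ι] (p : Seminorm ℝ (ι → ℝ))
    (hp : ∀ z, z ≠ 0 → 0 < p z) (v : ι → ℝ) :
    BddAbove {r | ∃ z, p z ≤ 1 ∧ r = v ⬝ᵥ z} := by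
  obtain ⟨m, hm, hle⟩ := p.exists_pos_mul_norm_le hp
  refine ⟨(∑ k, |v k|) / m, ?_⟩
  rintro _ ⟨z, hz, rfl⟩
  have hzm : ‖z‖ ≤ 1 / m := by rw [le_div_iff₀ hm, mul_comm]; exact (hle z).trans hz
  calc v ⬝ᵥ z ≤ ∑ k, |v k| * (1 / m) := by
        refine sum_le_sum fun k _ => ?_
        calc v k * z k ≤ |v k| * |z k| := (le_abs_self _).trans (abs_mul _ _).le
          _ ≤ |v k| * (1 / m) := by gcongr; exact (norm_le_pi_norm z k).trans hzm
    _ = (∑ k, |v k|) / m := by rw [← sum_mul, mul_one_div]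

end Seminorm

theorem isGreatest_vecMul_dotProduct {ι : Type*} [Fintype ι] {N : (ι → ℝ) → ℝ}
    {T : Matrix ι ι ℝ} {c z₀ : ι → ℝ} (hc : 0 ≤ c) (hT : ∀ i z, N z ≤ 1 → (T *ᵥ z) i ≤ 1)
    (hz₀ : T *ᵥ z₀ = 1) (hNz₀ : N z₀ ≤ 1) :
    IsGreatest {r | ∃ z, N z ≤ 1 ∧ r = (c ᵥ* T) ⬝ᵥ z} ((c ᵥ* T) ⬝ᵥ z₀) := by
  refine ⟨⟨z₀, hNz₀, rfl⟩, ?_⟩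
  rintro _ ⟨z, hz, rfl⟩
  rw [← dotProduct_mulVec, ← dotProduct_mulVec, hz₀]
  exact dotProduct_le_dotProduct_of_nonneg_left (fun i => by simpa using hT i z hz) hc

theorem Matrix.IsUpperTriangular.isUnit {ι K : Type*} [Fintype ι] [LinearOrder ι] [Field K]
    {T : Matrix ι ι K} (hT : T.IsUpperTriangular) (hdiag : ∀ i, T i i ≠ 0) :
    IsUnit T := by
  rw [isUnit_iff_isUnit_det, det_of_isUpperTriangular hT]
  exact (prod_ne_zero_iff.mpr fun i _ => hdiag i).isUnit

section UpperTriangular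

variable {ι : Type*} [Fintype ι] [LinearOrder ι] [LocallyFiniteOrderBot ι] {T : Matrix ι ι ℝ}

theorem Matrix.IsUpperTriangular.vecMul_apply (hT : T.IsUpperTriangular) (c : ι → ℝ) (j : ι) :
    (c ᵥ* T) j = c j * T j j + ∑ i ∈ Iio j, c i * T i j := by
  have hsub : ∑ i ∈ Iic j, c i * T i j = ∑ i, c i * T i j :=
    sum_subset (subset_univ _) fun i _ hi => by
      rw [hT (show j < i by simpa using hi), mul_zero]
  rw [← Iio_insert, sum_insert notMem_Iio_self] at hsub
  exact hsub.symm

theorem Matrix.IsUpperTriangular.mem_Icc_of_abs_one_sub_vecMul_le (hT : T.IsUpperTriangular)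
    (hdiag : ∀ j, 1 ≤ T j j) (hoff : ∀ i j, i < j → 0 ≤ T i j)
    (hcol : ∀ j, ∑ i ∈ Iio j, T i j ≤ 2 / 3) {c : ι → ℝ} (hc : ∀ k, |1 - (c ᵥ* T) k| ≤ 1 / 5)
    (j : ι) : c j ∈ Set.Icc 0 (6 / 5) := by
  induction j using WellFoundedLT.induction with
  | _ j ih =>
  have hS₀ : 0 ≤ ∑ i ∈ Iio j, c i * T i j :=
    sum_nonneg fun i hi => mul_nonneg (ih i (mem_Iio.mp hi)).1 (hoff i j (mem_Iio.mp hi))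
  have hS₁ : ∑ i ∈ Iio j, c i * T i j ≤ 4 / 5 :=
    calc ∑ i ∈ Iio j, c i * T i j ≤ ∑ i ∈ Iio j, 6 / 5 * T i j :=
          sum_le_sum fun i hi => mul_le_mul_of_nonneg_right (ih i (mem_Iio.mp hi)).2
            (hoff i j (mem_Iio.mp hi))
      _ ≤ 6 / 5 * (2 / 3) := by rw [← mul_sum]; gcongr; exact hcol j
      _ = 4 / 5 := by norm_num
  have hβ := abs_le.mp (hc j)
  rw [hT.vecMul_apply] at hβ
  have := hdiag j
  constructor <;> nlinarith

end UpperTriangular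

theorem natCast_mul_nine_zpow_le (m : ℕ) : (m : ℝ) * 9 ^ ((4 : ℤ) - 3 * (m + 1)) ≤ 1 / 9 := by
  rcases Nat.eq_zero_or_pos m with rfl | hm
  · norm_num
  calc (m : ℝ) * 9 ^ ((4 : ℤ) - 3 * (m + 1)) ≤ 9 ^ (m : ℤ) * 9 ^ ((4 : ℤ) - 3 * (m + 1)) := by
        gcongr
        exact_mod_cast (Nat.lt_pow_self (by norm_num)).le
    _ = 9 ^ ((1 : ℤ) - 2 * m) := by rw [← zpow_add₀ (by norm_num)]; ring_nf
    _ ≤ 9 ^ (-1 : ℤ) := zpow_le_zpow_right₀ (by norm_num) (by omega)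
    _ = 1 / 9 := by norm_num

theorem sum_Iio_le_of_le_nine_zpow {n : ℕ} {T : Matrix (Fin n) (Fin n) ℝ}
    (hT : ∀ i j : Fin n, i < j → T i j ≤ 9 ^ ((4 : ℤ) - 3 * ((j : ℕ) + 1))) (j : Fin n) :
    ∑ i ∈ Iio j, T i j ≤ 1 / 9 :=
  calc ∑ i ∈ Iio j, T i j ≤ #(Iio j) • (9 : ℝ) ^ ((4 : ℤ) - 3 * ((j : ℕ) + 1)) :=
        sum_le_card_nsmul _ _ _ fun i hi => hT i j (mem_Iio.mp hi)
    _ ≤ 1 / 9 := by rw [Fin.card_Iio, nsmul_eq_mul]; exact natCast_mul_nine_zpow_le j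

theorem stmt11_general (n : ℕ) (hn : 2 ≤ n) (lam : Fin n → ℝ) (ζ : Fin n → Fin n → ℝ)
    (hlam : ∀ i, 1 < lam i)
    (hζ : ∀ i j : Fin n, i < j →
      0 ≤ ζ i j ∧ ζ i j ≤ (9 : ℝ) ^ ((4 : ℤ) - 3 * ((j : ℕ) + 1)))
    (𝒯 : Matrix (Fin n) (Fin n) ℝ)
    (h𝒯 : ∀ i j : Fin n, 𝒯 i j = if i = j then lam i else if i < j then ζ i j else 0)
    (z₀ : Fin n → ℝ) (hz₀ : 𝒯.mulVec z₀ = fun _ => 1)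
    (N : (Fin n → ℝ) → ℝ)
    (hN_tri : ∀ x y : Fin n → ℝ, N (x + y) ≤ N x + N y)
    (hN_smul : ∀ (c : ℝ) (x : Fin n → ℝ), N (c • x) = |c| * N x)
    (hN_pos : ∀ x : Fin n → ℝ, x ≠ 0 → 0 < N x)
    (hNz₀ : ∀ i : Fin n, N z₀ = ∑ k, 𝒯 i k * z₀ k)
    (hdual : ∀ i : Fin n,
      sSup {r : ℝ | ∃ z : Fin n → ℝ, N z ≤ 1 ∧ r = ∑ k, 𝒯 i k * z k} ≤ 1) :
    ∀ β : Fin n → ℝ, (∀ k, |1 - β k| ≤ 1 / 5) →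
      sSup {r : ℝ | ∃ z : Fin n → ℝ, N z ≤ 1 ∧ r = ∑ k, β k * z k} =
        ∑ k, β k * z₀ k := by
  intro β hβ
  let i₀ : Fin n := ⟨0, by omega⟩
  have : Nonempty (Fin n) := ⟨i₀⟩
  have hupper : 𝒯.IsUpperTriangular := fun i j (hji : j < i) => by simp [h𝒯, hji.ne', hji.not_gt]
  have hdiag : ∀ j, 1 ≤ 𝒯 j j := fun j => by simpa [h𝒯] using (hlam j).le
  have hoff : ∀ i j, i < j → 0 ≤ 𝒯 i j ∧ 𝒯 i j ≤ 9 ^ ((4 : ℤ) - 3 * ((j : ℕ) + 1)) :=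
    fun i j hij => by simpa [h𝒯, hij.ne, hij] using hζ i j hij
  obtain ⟨c, rfl⟩ := vecMul_surjective_iff_isUnit.mpr
    (hupper.isUnit fun j => (one_pos.trans_le (hdiag j)).ne') β
  have hcol : ∀ j, ∑ i ∈ Iio j, 𝒯 i j ≤ 2 / 3 := fun j =>
    (sum_Iio_le_of_le_nine_zpow (fun i j h => (hoff i j h).2) j).trans (by norm_num)
  have hc : 0 ≤ c := fun j =>
    (hupper.mem_Icc_of_abs_one_sub_vecMul_le hdiag (fun i j h => (hoff i j h).1) hcol hβ j).1
  let p : Seminorm ℝ (Fin n → ℝ) := Seminorm.of N hN_tri fun a x => by simpa using hN_smul a x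
  have hrow : ∀ i z, N z ≤ 1 → (𝒯 *ᵥ z) i ≤ 1 := fun i z hz =>
    (le_csSup (p.bddAbove_dotProduct hN_pos (𝒯 i)) ⟨z, hz, rfl⟩).trans (hdual i)
  have hNz₀_le : N z₀ ≤ 1 := ((hNz₀ i₀).trans (congrFun hz₀ i₀)).le
  exact (isGreatest_vecMul_dotProduct hc hrow hz₀ hNz₀_le).csSup_eq

/-- **Lemma 4.7, second part.** With `n`, `C`, `λᵢ`, `ζ_{ij}` and the triangular matrix
`𝒯` as in the first part, let `z₀` be the solution of `𝒯 z = 𝟏`. Suppose `ℝⁿ` carries a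
norm `N` such that `N z₀ = zᵢ*·z₀` (where `zᵢ*` is the `i`-th row of `𝒯`) and the dual
norm of each `zᵢ*` is at most `1`. Then every `β` with `max_k |1 − βₖ| ≤ 1/5` has dual
norm `β·z₀`. (Lean index `j : Fin n` corresponds to paper index `j + 1`.) -/
theorem stmt11 (n : ℕ) (hn : 2 ≤ n) (C : ℝ) (lam : Fin n → ℝ) (ζ : Fin n → Fin n → ℝ)
    (hC : C ≤ 1.1) (hlamC : ∀ i, lam i < C) (hanti : StrictAnti lam)
    (hlam : ∀ i, 1 < lam i)
    (hζ : ∀ i j : Fin n, i < j →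
      0 ≤ ζ i j ∧ ζ i j ≤ (9 : ℝ) ^ ((4 : ℤ) - 3 * ((j : ℕ) + 1)))
    (𝒯 : Matrix (Fin n) (Fin n) ℝ)
    (h𝒯 : ∀ i j : Fin n, 𝒯 i j = if i = j then lam i else if i < j then ζ i j else 0)
    (z₀ : Fin n → ℝ) (hz₀ : 𝒯.mulVec z₀ = fun _ => 1)
    (N : (Fin n → ℝ) → ℝ)
    (hN_tri : ∀ x y : Fin n → ℝ, N (x + y) ≤ N x + N y)
    (hN_smul : ∀ (c : ℝ) (x : Fin n → ℝ), N (c • x) = |c| * N x)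
    (hN_pos : ∀ x : Fin n → ℝ, x ≠ 0 → 0 < N x)
    (hNz₀ : ∀ i : Fin n, N z₀ = ∑ k, 𝒯 i k * z₀ k)
    (hdual : ∀ i : Fin n,
      sSup {r : ℝ | ∃ z : Fin n → ℝ, N z ≤ 1 ∧ r = ∑ k, 𝒯 i k * z k} ≤ 1) :
    ∀ β : Fin n → ℝ, (∀ k, |1 - β k| ≤ 1 / 5) →
      sSup {r : ℝ | ∃ z : Fin n → ℝ, N z ≤ 1 ∧ r = ∑ k, β k * z k} =
        ∑ k, β k * z₀ k :=
  stmt11_general n hn lam ζ hlam hζ 𝒯 h𝒯 z₀ hz₀ N hN_tri hN_smul hN_pos hNz₀ hdual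
end

section
/- Let (X, d) be a locally compact metric space and let G be a bounded group of lattice isomorphisms of C₀(X), i.e., a group under composition of lattice isomorphisms for which there exists C ≥ 1 with C⁻¹‖x‖_∞ ≤ ‖g x‖_∞ ≤ C‖x‖_∞ for all g ∈ G and x ∈ C₀(X). For g ∈ G let a_g : X → (0,∞) and the homeomorphism φ_g : X → X be the unique pair with g f = a_g · (f ∘ φ_g) for all f. If the family {a_g : g ∈ G} is equicontinuous on every compact subset of X, then the function m : X → ℝ defined by m(t) = inf_{g ∈ G} a_g(t) is continuous (and hence so is m_G = 1/m, which satisfies sup_{g ∈ G} ‖g x‖_∞ = sup_{t ∈ X} m_G(t)·|x(t)| for every x ∈ C₀(X)). -/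
/-!
Each `g ∈ G` acts by `g f = a_g · (f ∘ φ_g)`. Testing `g ∘ g⁻¹ = id` against bump functions gives
`φ_{g⁻¹} ∘ φ_g = id` and `a_g · (a_{g⁻¹} ∘ φ_g) = 1`, while `‖g⁻¹‖ ≤ C` gives `a_{g⁻¹} ≤ C`;
hence every weight is `≥ C⁻¹` and `m = inf_g a_g` is positive. Equicontinuity of the weights
passes to their infimum, so `m` is continuous. Finally
`|g x (t)| = |x (φ_g t)| / a_{g⁻¹}(φ_g t) ≤ m(φ_g t)⁻¹ |x (φ_g t)|`, and conversely
`|x t| ≤ a_g(t) ‖g⁻¹ x‖` for every `g`, which gives the two inequalities between the suprema.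
-/

open ZeroAtInfty Filter Topology Metric

noncomputable section

open Set

theorem ciInf_le_ciInf_add {ι : Type*} [Nonempty ι] {f g : ι → ℝ} (hf : BddBelow (range f))
    {c : ℝ} (h : ∀ i, f i ≤ g i + c) : ⨅ i, f i ≤ (⨅ i, g i) + c :=
  sub_le_iff_le_add.mp <| le_ciInf fun i => sub_le_iff_le_add.mpr <| (ciInf_le hf i).trans (h i)

theorem EquicontinuousAt.continuousAt_iInf {ι X : Type*} [TopologicalSpace X] [Nonempty ι]
    {F : ι → X → ℝ} {x₀ : X} (hF : EquicontinuousAt F x₀)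
    (hbdd : ∀ x, BddBelow (range fun i => F i x)) : ContinuousAt (fun x => ⨅ i, F i x) x₀ := by
  refine Metric.tendsto_nhds.mpr fun ε hε => ?_
  filter_upwards [Metric.equicontinuousAt_iff_right.mp hF (ε / 2) (half_pos hε)] with x hx
  have hclose : ∀ i, |F i x₀ - F i x| < ε / 2 := hx
  have h₁ := ciInf_le_ciInf_add (hbdd x) (g := fun i => F i x₀) (c := ε / 2) fun i => by
    linarith [(abs_sub_lt_iff.mp (hclose i)).2]
  have h₂ := ciInf_le_ciInf_add (hbdd x₀) (g := fun i => F i x) (c := ε / 2) fun i => by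
    linarith [(abs_sub_lt_iff.mp (hclose i)).1]
  rw [Real.dist_eq, abs_sub_lt_iff]
  constructor <;> linarith

theorem Metric.equicontinuous_of_forall_isCompact {ι X α : Type*} [PseudoMetricSpace X]
    [WeaklyLocallyCompactSpace X] [PseudoMetricSpace α] {F : ι → X → α}
    (h : ∀ K : Set X, IsCompact K → ∀ ε > 0, ∃ δ > 0, ∀ s ∈ K, ∀ t ∈ K,
      dist s t < δ → ∀ i, dist (F i s) (F i t) < ε) :
    Equicontinuous F := by
  intro x
  rw [Metric.equicontinuousAt_iff_pair]
  intro ε hε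
  obtain ⟨K, hK, hKx⟩ := exists_compact_mem_nhds x
  obtain ⟨δ, hδ, hF⟩ := h K hK ε hε
  refine ⟨K ∩ ball x (δ / 2), inter_mem hKx (ball_mem_nhds x (half_pos hδ)),
    fun s hs t ht => hF s hs.1 t ht.1 ?_⟩
  calc dist s t ≤ dist s x + dist t x := dist_triangle_right s t x
    _ < δ / 2 + δ / 2 := add_lt_add hs.2 ht.2
    _ = δ := add_halves δ

namespace ZeroAtInftyContinuousMap

variable {X : Type*} [TopologicalSpace X]

theorem norm_apply_le {β : Type*} [SeminormedAddCommGroup β] (f : C₀(X, β)) (x : X) :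
    ‖f x‖ ≤ ‖f‖ := by
  rw [← norm_toBCF_eq_norm]
  exact f.toBCF.norm_coe_le_norm x

theorem norm_le_of_forall_le {β : Type*} [SeminormedAddCommGroup β] {f : C₀(X, β)} {C : ℝ}
    (hC : 0 ≤ C) (h : ∀ x, ‖f x‖ ≤ C) : ‖f‖ ≤ C := by
  rw [← norm_toBCF_eq_norm]
  exact (BoundedContinuousFunction.norm_le hC).mpr h

variable [T2Space X] [LocallyCompactSpace X]

theorem exists_norm_eq_one_apply_eq_one {p : X} {s : Set X} (hs : IsClosed s) (hp : p ∉ s) :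
    ∃ f : C₀(X, ℝ), ‖f‖ = 1 ∧ f p = 1 ∧ EqOn f 0 s := by
  obtain ⟨f, hf1, hf0, hfc, hf⟩ := exists_continuous_one_zero_of_isCompact isCompact_singleton hs
    (disjoint_singleton_left.mpr hp)
  let F : C₀(X, ℝ) := ⟨f, hfc.is_zero_at_infty⟩
  have hFp : F p = 1 := hf1 rfl
  refine ⟨F, le_antisymm ?_ ?_, hFp, hf0⟩
  · exact norm_le_of_forall_le zero_le_one fun x => by
      rw [Real.norm_eq_abs, abs_le]
      change -1 ≤ f x ∧ f x ≤ 1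
      exact ⟨by linarith [(hf x).1], (hf x).2⟩
  · simpa [hFp] using norm_apply_le F p

theorem eq_and_eq_one_of_forall_apply_eq_mul {t p : X} {c : ℝ}
    (h : ∀ f : C₀(X, ℝ), f t = c * f p) : p = t ∧ c = 1 := by
  have hpt : p = t := by
    by_contra hne
    obtain ⟨f, -, hft, hfp⟩ :=
      exists_norm_eq_one_apply_eq_one isClosed_singleton (Ne.symm hne : t ∉ ({p} : Set X))
    simpa [hft, hfp rfl] using h f
  obtain ⟨f, -, hft, -⟩ := exists_norm_eq_one_apply_eq_one isClosed_empty (notMem_empty t)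
  refine ⟨hpt, ?_⟩
  simpa [hpt, hft] using (h f).symm

theorem abs_weight_le_of_norm_le {T : C₀(X, ℝ) → C₀(X, ℝ)} {w : X → ℝ} {ψ : X → X} {C : ℝ}
    (hT : ∀ f t, T f t = w t * f (ψ t)) (hC : ∀ f, ‖T f‖ ≤ C * ‖f‖) (t : X) : |w t| ≤ C := by
  obtain ⟨f, hf, hf1, -⟩ := exists_norm_eq_one_apply_eq_one isClosed_empty (notMem_empty (ψ t))
  calc |w t| = ‖T f t‖ := by rw [hT, hf1, mul_one, Real.norm_eq_abs]
    _ ≤ ‖T f‖ := norm_apply_le _ _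
    _ ≤ C := by simpa [hf] using hC f

theorem comp_eq_and_mul_eq_one_of_leftInverse {T S : C₀(X, ℝ) → C₀(X, ℝ)} {u v : X → ℝ}
    {φ ψ : X → X} (hT : ∀ f t, T f t = u t * f (φ t)) (hS : ∀ f t, S f t = v t * f (ψ t))
    (hTS : Function.LeftInverse T S) (t : X) : ψ (φ t) = t ∧ u t * v (φ t) = 1 :=
  eq_and_eq_one_of_forall_apply_eq_mul fun f => by
    conv_lhs => rw [← hTS f]
    rw [hT, hS, mul_assoc]

end ZeroAtInftyContinuousMap

section WeightedCompositionGroup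

open ZeroAtInftyContinuousMap

variable {X : Type*} [TopologicalSpace X] [T2Space X] [LocallyCompactSpace X]
  {G : Set (C₀(X, ℝ) ≃L[ℝ] C₀(X, ℝ))} {a : (C₀(X, ℝ) ≃L[ℝ] C₀(X, ℝ)) → X → ℝ}
  {φ : (C₀(X, ℝ) ≃L[ℝ] C₀(X, ℝ)) → X → X}

theorem norm_apply_le_iSup_inv_iInf_mul_abs (h_inv : ∀ g ∈ G, g.symm ∈ G)
    (hrep : ∀ g ∈ G, ∀ (f : C₀(X, ℝ)) (t : X), g f t = a g t * f (φ g t))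
    (hpos : ∀ g ∈ G, ∀ t, 0 < a g t) (hm : ∀ t, 0 < ⨅ g : G, a g.1 t) {x : C₀(X, ℝ)}
    (hbdd : BddAbove (range fun t => (⨅ g : G, a g.1 t)⁻¹ * |x t|)) {g} (hg : g ∈ G) :
    ‖g x‖ ≤ ⨆ t, (⨅ g : G, a g.1 t)⁻¹ * |x t| := by
  refine norm_le_of_forall_le (Real.iSup_nonneg fun t => by have := hm t; positivity) fun t => ?_
  have hmul := (comp_eq_and_mul_eq_one_of_leftInverse (hrep g hg) (hrep g.symm (h_inv g hg))
    g.apply_symm_apply t).2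
  have hinf : ⨅ g' : G, a g'.1 (φ g t) ≤ a g.symm (φ g t) :=
    ciInf_le ⟨0, forall_mem_range.mpr fun (g' : G) => (hpos _ g'.2 _).le⟩ ⟨g.symm, h_inv g hg⟩
  calc ‖g x t‖ = (a g.symm (φ g t))⁻¹ * |x (φ g t)| := by
        rw [hrep g hg, Real.norm_eq_abs, abs_mul, abs_of_pos (hpos g hg t),
          eq_inv_of_mul_eq_one_left hmul]
    _ ≤ (⨅ g' : G, a g'.1 (φ g t))⁻¹ * |x (φ g t)| := by gcongr; exact hm _
    _ ≤ _ := le_ciSup hbdd _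

theorem inv_iInf_mul_abs_le_iSup_norm [Nonempty G] (h_inv : ∀ g ∈ G, g.symm ∈ G)
    (hrep : ∀ g ∈ G, ∀ (f : C₀(X, ℝ)) (t : X), g f t = a g t * f (φ g t))
    (hpos : ∀ g ∈ G, ∀ t, 0 < a g t) {x : C₀(X, ℝ)} (hbdd : BddAbove (range fun g : G => ‖g.1 x‖))
    {t : X} (hm : 0 < ⨅ g : G, a g.1 t) :
    (⨅ g : G, a g.1 t)⁻¹ * |x t| ≤ ⨆ g : G, ‖g.1 x‖ := by
  have hS : 0 ≤ ⨆ g : G, ‖g.1 x‖ := Real.iSup_nonneg fun _ => norm_nonneg _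
  have hle : ∀ g : G, |x t| ≤ a g.1 t * ⨆ g : G, ‖g.1 x‖ := fun ⟨g, hg⟩ => by
    obtain ⟨hφ, hmul⟩ := comp_eq_and_mul_eq_one_of_leftInverse (hrep g hg)
      (hrep g.symm (h_inv g hg)) g.apply_symm_apply t
    calc |x t| = a g t * ‖g.symm x (φ g t)‖ := by
          rw [hrep g.symm (h_inv g hg), hφ, Real.norm_eq_abs, abs_mul,
            abs_of_pos (hpos _ (h_inv g hg) _), ← mul_assoc, hmul, one_mul]
      _ ≤ a g t * ⨆ g : G, ‖g.1 x‖ := by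
          gcongr
          · exact (hpos g hg t).le
          · exact (norm_apply_le _ _).trans (le_ciSup hbdd ⟨g.symm, h_inv g hg⟩)
  rw [inv_mul_le_iff₀ hm, Real.iInf_mul_of_nonneg hS]
  exact le_ciInf hle

theorem iSup_norm_eq_iSup_inv_iInf_mul_abs [Nonempty G] (h_inv : ∀ g ∈ G, g.symm ∈ G)
    (hrep : ∀ g ∈ G, ∀ (f : C₀(X, ℝ)) (t : X), g f t = a g t * f (φ g t))
    (hpos : ∀ g ∈ G, ∀ t, 0 < a g t) (hm : ∀ t, 0 < ⨅ g : G, a g.1 t) {x : C₀(X, ℝ)}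
    (hbdd : BddAbove (range fun g : G => ‖g.1 x‖)) :
    (⨆ g : G, ‖g.1 x‖) = ⨆ t : X, (⨅ g : G, a g.1 t)⁻¹ * |x t| := by
  have hle t := inv_iInf_mul_abs_le_iSup_norm h_inv hrep hpos hbdd (hm t)
  exact le_antisymm
    (Real.iSup_le (fun g => norm_apply_le_iSup_inv_iInf_mul_abs h_inv hrep hpos hm
      ⟨_, forall_mem_range.mpr hle⟩ g.2) (Real.iSup_nonneg fun t => by have := hm t; positivity))
    (Real.iSup_le hle (Real.iSup_nonneg fun _ => norm_nonneg _))

end WeightedCompositionGroup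

theorem stmt16_general {X : Type*} [MetricSpace X] [LocallyCompactSpace X]
    (G : Set (C₀(X, ℝ) ≃L[ℝ] C₀(X, ℝ)))
    (h_id : ContinuousLinearEquiv.refl ℝ C₀(X, ℝ) ∈ G)
    (h_inv : ∀ g ∈ G, g.symm ∈ G)
    (C : ℝ)
    (h_bdd : ∀ g ∈ G, ∀ x : C₀(X, ℝ), C⁻¹ * ‖x‖ ≤ ‖g x‖ ∧ ‖g x‖ ≤ C * ‖x‖)
    (a : (C₀(X, ℝ) ≃L[ℝ] C₀(X, ℝ)) → X → ℝ)
    (φ : (C₀(X, ℝ) ≃L[ℝ] C₀(X, ℝ)) → X ≃ₜ X)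
    (hrep : ∀ g ∈ G, ∀ (f : C₀(X, ℝ)) (t : X), g f t = a g t * f (φ g t))
    (ha_pos : ∀ g ∈ G, ∃ c > 0, ∀ t, c ≤ a g t)
    (h_equi : ∀ K : Set X, IsCompact K → ∀ ε > 0, ∃ δ > 0, ∀ s ∈ K, ∀ t ∈ K,
      dist s t < δ → ∀ g ∈ G, |a g s - a g t| < ε) :
    Continuous (fun t : X => ⨅ g : G, a g.1 t) ∧
    Continuous (fun t : X => (⨅ g : G, a g.1 t)⁻¹) ∧
    ∀ x : C₀(X, ℝ),
      (⨆ g : G, ‖g.1 x‖) = ⨆ t : X, (⨅ g : G, a g.1 t)⁻¹ * |x t| := by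
  have : Nonempty G := ⟨⟨_, h_id⟩⟩
  have hpos : ∀ g ∈ G, ∀ t, 0 < a g t := fun g hg t =>
    let ⟨_, hc, hle⟩ := ha_pos g hg; hc.trans_le (hle t)
  have hinv_le : ∀ g ∈ G, ∀ t, (a g t)⁻¹ ≤ C := fun g hg t => by
    rw [← eq_inv_of_mul_eq_one_right (ZeroAtInftyContinuousMap.comp_eq_and_mul_eq_one_of_leftInverse
      (hrep g hg) (hrep g.symm (h_inv g hg)) g.apply_symm_apply t).2]
    exact (le_abs_self _).trans <| ZeroAtInftyContinuousMap.abs_weight_le_of_norm_le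
      (hrep g.symm (h_inv g hg)) (fun f => (h_bdd _ (h_inv g hg) f).2) _
  have hm_pos : ∀ t, 0 < ⨅ g : G, a g.1 t := fun t =>
    have hC : 0 < C := (inv_pos.mpr (hpos _ h_id t)).trans_le (hinv_le _ h_id t)
    (inv_pos.mpr hC).trans_le (le_ciInf fun g => inv_le_of_inv_le₀ (hpos _ g.2 t) (hinv_le _ g.2 t))
  have hequi : Equicontinuous fun (g : G) => a g.1 :=
    Metric.equicontinuous_of_forall_isCompact fun K hK ε hε =>
      (h_equi K hK ε hε).imp fun _ ⟨hδ, h⟩ => ⟨hδ, fun s hs t ht hst g => h s hs t ht hst g g.2⟩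
  have hm_cont : Continuous fun t => ⨅ g : G, a g.1 t :=
    continuous_iff_continuousAt.mpr fun t => (hequi t).continuousAt_iInf fun t =>
      ⟨0, forall_mem_range.mpr fun g => (hpos _ g.2 t).le⟩
  refine ⟨hm_cont, hm_cont.inv₀ fun t => (hm_pos t).ne', fun x => ?_⟩
  exact iSup_norm_eq_iSup_inv_iInf_mul_abs h_inv hrep hpos hm_pos
    ⟨C * ‖x‖, forall_mem_range.mpr fun g => (h_bdd _ g.2 x).2⟩

/-- **Corollary 6.2.** Let `(X, d)` be a locally compact metric space and `G` a bounded
group of lattice isomorphisms of `C₀(X)`, with weights `a_g` and homeomorphisms `φ_g`.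
If the family `{a_g : g ∈ G}` is equicontinuous on every compact subset of `X`, then
`m(t) = inf_{g ∈ G} a_g(t)` is continuous; hence so is `m_G = 1/m`, which satisfies
`sup_{g ∈ G} ‖g x‖ = sup_{t ∈ X} m_G(t)·|x(t)|` for every `x ∈ C₀(X)`. -/
theorem stmt16 {X : Type*} [MetricSpace X] [LocallyCompactSpace X]
    (G : Set (C₀(X, ℝ) ≃L[ℝ] C₀(X, ℝ)))
    (h_id : ContinuousLinearEquiv.refl ℝ C₀(X, ℝ) ∈ G)
    (h_comp : ∀ g ∈ G, ∀ h ∈ G, g.trans h ∈ G)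
    (h_inv : ∀ g ∈ G, g.symm ∈ G)
    (h_lat : ∀ g ∈ G, ∀ f₁ f₂ : C₀(X, ℝ), g (c0sup f₁ f₂) = c0sup (g f₁) (g f₂))
    (C : ℝ) (hC : 1 ≤ C)
    (h_bdd : ∀ g ∈ G, ∀ x : C₀(X, ℝ), C⁻¹ * ‖x‖ ≤ ‖g x‖ ∧ ‖g x‖ ≤ C * ‖x‖)
    (a : (C₀(X, ℝ) ≃L[ℝ] C₀(X, ℝ)) → X → ℝ)
    (φ : (C₀(X, ℝ) ≃L[ℝ] C₀(X, ℝ)) → X ≃ₜ X)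
    (hrep : ∀ g ∈ G, ∀ (f : C₀(X, ℝ)) (t : X), g f t = a g t * f (φ g t))
    (ha_cont : ∀ g ∈ G, Continuous (a g))
    (ha_pos : ∀ g ∈ G, ∃ c > 0, ∀ t, c ≤ a g t)
    (ha_bd : ∀ g ∈ G, ∃ C' : ℝ, ∀ t, a g t ≤ C')
    (h_equi : ∀ K : Set X, IsCompact K → ∀ ε > 0, ∃ δ > 0, ∀ s ∈ K, ∀ t ∈ K,
      dist s t < δ → ∀ g ∈ G, |a g s - a g t| < ε) :
    Continuous (fun t : X => ⨅ g : G, a g.1 t) ∧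
    Continuous (fun t : X => (⨅ g : G, a g.1 t)⁻¹) ∧
    ∀ x : C₀(X, ℝ),
      (⨆ g : G, ‖g.1 x‖) = ⨆ t : X, (⨅ g : G, a g.1 t)⁻¹ * |x t| :=
  stmt16_general G h_id h_inv C h_bdd a φ hrep ha_pos h_equi

end
end

section
/- Let X be a metric space and let T be a lattice isomorphism of C_b(X), the Banach lattice of bounded real-valued continuous functions on X with the supremum norm and pointwise order. Then there exist a function a ∈ C_b(X) with inf a > 0 and a homeomorphism φ : X → X such that (T x)(t) = a(t)·x(φ(t)) for all x ∈ C_b(X) and all t ∈ X. Moreover, ‖a‖_∞ = ‖T‖. -/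
/-!
Call a linear functional `m` on `C_b(X)` with `m 1 = 1` and `m (x ⊔ y) = max (m x) (m y)` a
lattice state. A lattice state killing the truncated distance `min (dist · s) 1` is evaluation
at `s`. For `t ∈ X`, `x ↦ (T x)(t) / (T 1)(t)` is a lattice state, and transporting states
through `T⁻¹` shows that it is the only one killing `f = T⁻¹ (min (dist · t) 1) ≥ 0`.
A state that is the only one killing some `f ≥ 0` is a point evaluation: otherwise `inf f = 0`
is not attained, a sequence along which `f` decreases strictly to `0` is closed and discrete, and
ultrafilter limits along its even and odd terms, separated by an Urysohn function, are two
different states killing `f`. This gives `(T x)(t) = (T 1)(t) · x (φ t)`; `φ` is continuous since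
`x ∘ φ = T x / T 1`, and the same construction for `T⁻¹` inverts it.
-/

open BoundedContinuousFunction Filter Topology Set

structure IsLatticeState {X : Type*} [TopologicalSpace X] (m : (X →ᵇ ℝ) → ℝ) : Prop
    extends IsLinearMap ℝ m where
  map_one : m 1 = 1
  map_sup : ∀ x y, m (x ⊔ y) = max (m x) (m y)

section LatticeState

variable {X : Type*} [TopologicalSpace X]

namespace IsLatticeState

variable {m : (X →ᵇ ℝ) → ℝ} (hm : IsLatticeState m)
include hm

theorem mono : Monotone m :=
  Monotone.of_map_sup hm.map_sup

theorem map_abs (x : X →ᵇ ℝ) : m |x| = |m x| := by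
  change m (x ⊔ -x) = _
  rw [hm.map_sup, hm.map_neg, abs_eq_max_neg]

theorem map_const (c : ℝ) : m (const X c) = c := by
  have : const X c = c • (1 : X →ᵇ ℝ) := by ext; simp
  rw [this, hm.map_smul, hm.map_one, smul_eq_mul, mul_one]

end IsLatticeState

theorem isLatticeState_eval (t : X) : IsLatticeState fun g : X →ᵇ ℝ => g t where
  map_add _ _ := rfl
  map_smul _ _ := rfl
  map_one := rfl
  map_sup _ _ := rfl

theorem IsLatticeState.comp_div {Y F : Type*} [TopologicalSpace Y]
    [FunLike F (X →ᵇ ℝ) (Y →ᵇ ℝ)] [LinearMapClass F ℝ (X →ᵇ ℝ) (Y →ᵇ ℝ)]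
    {m : (Y →ᵇ ℝ) → ℝ} (hm : IsLatticeState m) {S : F}
    (hS : ∀ x y, S (x ⊔ y) = S x ⊔ S y) (h : 0 < m (S 1)) :
    IsLatticeState fun x => m (S x) / m (S 1) where
  map_add x y := by simp only [map_add, hm.map_add, add_div]
  map_smul c x := by simp only [map_smul, hm.map_smul, smul_eq_mul, mul_div_assoc]
  map_one := div_self h.ne'
  map_sup x y := by simp only [hS, hm.map_sup, max_div_div_right h.le]

noncomputable def ultrafilterState (𝒰 : Ultrafilter X) (g : X →ᵇ ℝ) : ℝ :=
  limUnder (𝒰 : Filter X) g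

theorem tendsto_ultrafilterState (𝒰 : Ultrafilter X) (g : X →ᵇ ℝ) :
    Tendsto g 𝒰 (𝓝 (ultrafilterState 𝒰 g)) := by
  refine tendsto_nhds_limUnder ?_
  have hg : (𝒰.map g : Filter ℝ) ≤ 𝓟 (Metric.closedBall 0 ‖g‖) :=
    le_principal_iff.2 <| Filter.mem_map.2 <| univ_mem' fun t =>
      mem_closedBall_zero_iff.2 (g.norm_coe_le_norm t)
  obtain ⟨c, -, hc⟩ := (isCompact_closedBall (0 : ℝ) ‖g‖).ultrafilter_le_nhds _ hg
  exact ⟨c, hc⟩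

theorem ultrafilterState_eq_of_tendsto {𝒰 : Ultrafilter X} {g : X →ᵇ ℝ} {c : ℝ}
    (h : Tendsto g 𝒰 (𝓝 c)) : ultrafilterState 𝒰 g = c :=
  tendsto_nhds_unique (tendsto_ultrafilterState 𝒰 g) h

theorem ultrafilterState_map_eq_of_tendsto {ι : Type*} {U : Ultrafilter ι} {w : ι → X}
    {g : X →ᵇ ℝ} {c : ℝ} (h : Tendsto (g ∘ w) U (𝓝 c)) : ultrafilterState (U.map w) g = c :=
  ultrafilterState_eq_of_tendsto (by rwa [Ultrafilter.coe_map, tendsto_map'_iff])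

theorem isLatticeState_ultrafilterState (𝒰 : Ultrafilter X) :
    IsLatticeState (ultrafilterState 𝒰) where
  map_add x y := ultrafilterState_eq_of_tendsto <|
    (tendsto_ultrafilterState 𝒰 x).add (tendsto_ultrafilterState 𝒰 y)
  map_smul c x := ultrafilterState_eq_of_tendsto <| by
    simpa using (tendsto_ultrafilterState 𝒰 x).const_mul c
  map_one := ultrafilterState_eq_of_tendsto tendsto_const_nhds
  map_sup x y := ultrafilterState_eq_of_tendsto <|
    (tendsto_ultrafilterState 𝒰 x).max (tendsto_ultrafilterState 𝒰 y)

end LatticeState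

section Separation

variable {X : Type*} [TopologicalSpace X]

theorem locallyFinite_singleton_of_tendsto_zero {ι : Type*} {f : X → ℝ} (hf : Continuous f)
    (hpos : ∀ x, 0 < f x) {v : ι → X} (hv : Tendsto (f ∘ v) cofinite (𝓝 0)) :
    LocallyFinite fun i => ({v i} : Set X) := by
  intro x
  refine ⟨{y | f x / 2 < f y}, (isOpen_lt continuous_const hf).mem_nhds
    (half_lt_self (hpos x)), ?_⟩
  simp only [singleton_inter_nonempty]
  exact (eventually_cofinite.1 (hv.eventually (gt_mem_nhds (half_pos (hpos x))))).subset
    fun i hi => not_lt.2 (le_of_lt hi)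

theorem isClosed_image_of_locallyFinite [T1Space X] {ι : Type*} {v : ι → X}
    (hv : LocallyFinite fun i => ({v i} : Set X)) (P : Set ι) : IsClosed (v '' P) := by
  rw [image_eq_range, ← iUnion_singleton_eq_range]
  exact (hv.comp_injective Subtype.val_injective).isClosed_iUnion fun _ => isClosed_singleton

variable [T1Space X] [NormalSpace X]

theorem exists_isLatticeState_ne {f : X →ᵇ ℝ} (hf : IsGLB (range f) 0) (h0 : 0 ∉ range f) :
    ∃ m₁ m₂, IsLatticeState m₁ ∧ IsLatticeState m₂ ∧ m₁ f = 0 ∧ m₂ f = 0 ∧ m₁ ≠ m₂ := by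
  obtain ⟨r, hr_anti, -, hr_lim, hr_mem⟩ :=
    hf.exists_seq_strictAnti_tendsto_of_notMem h0 (IsLUB.nonempty (α := ℝᵒᵈ) hf)
  choose v hv using hr_mem
  have hfv : f ∘ v = r := funext hv
  have hv_inj : Function.Injective v := fun i j hij => hr_anti.injective <| by
    rw [← hv, ← hv, hij]
  have hpos : ∀ x, 0 < f x := fun x =>
    (hf.1 (mem_range_self x)).lt_of_ne fun h => h0 ⟨x, h.symm⟩
  have hloc := locallyFinite_singleton_of_tendsto_zero f.continuous hpos
    (hfv ▸ Nat.cofinite_eq_atTop ▸ hr_lim)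
  obtain ⟨g, hg_even, hg_odd, -⟩ := exists_bounded_zero_one_of_closed
    (isClosed_image_of_locallyFinite hloc {n | Even n})
    (isClosed_image_of_locallyFinite hloc {n | Even n}ᶜ)
    (disjoint_image_of_injective hv_inj disjoint_compl_right)
  let U : Ultrafilter ℕ := Ultrafilter.of atTop
  have hU : (U : Filter ℕ) ≤ atTop := Ultrafilter.of_le _
  have hr_lim' (k : ℕ) : Tendsto (f ∘ fun n => v (2 * n + k)) U (𝓝 0) := by
    rw [show f ∘ (fun n => v (2 * n + k)) = r ∘ fun n => 2 * n + k from funext fun n => hv _]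
    exact (hr_lim.comp (tendsto_atTop_atTop.2 fun b => ⟨b, fun n hn => by omega⟩)).mono_left hU
  refine ⟨_, _, isLatticeState_ultrafilterState (U.map fun n => v (2 * n)),
    isLatticeState_ultrafilterState (U.map fun n => v (2 * n + 1)),
    ultrafilterState_map_eq_of_tendsto (hr_lim' 0), ultrafilterState_map_eq_of_tendsto (hr_lim' 1),
    fun h => zero_ne_one (α := ℝ) ?_⟩
  calc (0 : ℝ) = ultrafilterState (U.map fun n => v (2 * n)) g :=
        (ultrafilterState_map_eq_of_tendsto (tendsto_const_nhds.congr fun n =>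
          (hg_even (mem_image_of_mem v (even_two_mul n))).symm)).symm
    _ = ultrafilterState (U.map fun n => v (2 * n + 1)) g := by rw [h]
    _ = 1 := ultrafilterState_map_eq_of_tendsto (tendsto_const_nhds.congr fun n =>
          (hg_odd (mem_image_of_mem v (Nat.not_even_two_mul_add_one n))).symm)

theorem IsLatticeState.exists_eq_eval_of_unique {m : (X →ᵇ ℝ) → ℝ} (hm : IsLatticeState m)
    {f : X →ᵇ ℝ} (hf : 0 ≤ f) (hmf : m f = 0)
    (huniq : ∀ m', IsLatticeState m' → m' f = 0 → m' = m) : ∃ s, ∀ g, m g = g s := by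
  by_cases h0 : 0 ∈ range f
  · obtain ⟨s, hs⟩ := h0
    exact ⟨s, fun g => (congrFun (huniq _ (isLatticeState_eval s) hs) g).symm⟩
  have hglb : IsGLB (range f) 0 := ⟨forall_mem_range.2 hf, fun b hb => by
    simpa [hm.map_const, hmf] using hm.mono (show const X b ≤ f from fun t => hb ⟨t, rfl⟩)⟩
  obtain ⟨m₁, m₂, h₁, h₂, hf₁, hf₂, hne⟩ := exists_isLatticeState_ne hglb h0
  exact (hne ((huniq _ h₁ hf₁).trans (huniq _ h₂ hf₂).symm)).elim

end Separation

section MapSup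

variable {X Y F : Type*} [TopologicalSpace X] [TopologicalSpace Y]
  [FunLike F (X →ᵇ ℝ) (Y →ᵇ ℝ)] [LinearMapClass F ℝ (X →ᵇ ℝ) (Y →ᵇ ℝ)] {S : F}
  (hS : ∀ x y, S (x ⊔ y) = S x ⊔ S y)
include hS

theorem map_abs_of_map_sup (x : X →ᵇ ℝ) : S |x| = |S x| := by
  change S (x ⊔ -x) = S x ⊔ -S x
  rw [hS, map_neg]

theorem abs_map_le_norm_smul_map_one (x : X →ᵇ ℝ) : |S x| ≤ ‖x‖ • S 1 := by
  rw [← map_abs_of_map_sup hS, ← map_smul]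
  exact Monotone.of_map_sup hS fun t => by simpa using x.norm_coe_le_norm t

end MapSup

section LatticeIso

variable {X : Type*} [TopologicalSpace X] {T : (X →ᵇ ℝ) ≃L[ℝ] (X →ᵇ ℝ)}
  (hT : ∀ x y, T (x ⊔ y) = T x ⊔ T y)
include hT

theorem map_sup_symm_of_map_sup (x y : X →ᵇ ℝ) : T.symm (x ⊔ y) = T.symm x ⊔ T.symm y :=
  T.injective (by simp only [hT, T.apply_symm_apply])

theorem one_le_norm_smul_map_one : (1 : X →ᵇ ℝ) ≤ ‖T.symm 1‖ • T 1 := fun t => by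
  simpa using abs_map_le_norm_smul_map_one hT (T.symm 1) t

theorem IsLatticeState.map_one_pos {m : (X →ᵇ ℝ) → ℝ} (hm : IsLatticeState m) : 0 < m (T 1) := by
  have h := hm.mono (one_le_norm_smul_map_one hT)
  rw [hm.map_one, hm.map_smul, smul_eq_mul] at h
  exact pos_of_mul_pos_right (one_pos.trans_le h) (norm_nonneg _)

theorem exists_pos_le_map_one : ∃ c > 0, ∀ t, c ≤ T 1 t := by
  refine ⟨(‖T.symm 1‖ + 1)⁻¹, by positivity, fun t => ?_⟩
  have h1 : 1 ≤ ‖T.symm 1‖ * T 1 t := by simpa using one_le_norm_smul_map_one hT t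
  have h0 : 0 < T 1 t := (isLatticeState_eval t).map_one_pos hT
  rw [inv_le_iff_one_le_mul₀ (by positivity)]
  nlinarith

end LatticeIso

section TruncDist

variable {X : Type*}

def truncDist [PseudoMetricSpace X] (s : X) : X →ᵇ ℝ :=
  mkOfBound ⟨fun u => min (dist u s) 1, by fun_prop⟩ 1 fun _ _ =>
    Real.dist_le_of_mem_Icc_01 ⟨le_min dist_nonneg zero_le_one, min_le_right _ _⟩
      ⟨le_min dist_nonneg zero_le_one, min_le_right _ _⟩

@[simp]
theorem truncDist_apply [PseudoMetricSpace X] (s u : X) : truncDist s u = min (dist u s) 1 :=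
  rfl

theorem truncDist_nonneg [PseudoMetricSpace X] (s : X) : 0 ≤ truncDist s := fun _ =>
  le_min dist_nonneg zero_le_one

theorem truncDist_eq_zero [MetricSpace X] {s u : X} : truncDist s u = 0 ↔ u = s := by
  simp +contextual [min_eq_iff]

theorem exists_abs_sub_const_le_add_smul_truncDist [PseudoMetricSpace X] (g : X →ᵇ ℝ) (s : X)
    {ε : ℝ} (hε : 0 < ε) : ∃ C : ℝ, |g - const X (g s)| ≤ const X ε + C • truncDist s := by
  obtain ⟨δ, hδ, hg⟩ := Metric.continuous_iff.1 g.continuous s ε hε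
  have hδ' : 0 < min δ 1 := lt_min hδ one_pos
  refine ⟨2 * ‖g‖ / min δ 1, fun u => ?_⟩
  simp only [ContinuousMap.toFun_eq_coe, coe_toContinuousMap, coe_abs, coe_sub, const_apply,
    Pi.abs_apply, Pi.sub_apply, coe_add, coe_smul, truncDist_apply, smul_eq_mul, Pi.add_apply]
  have hC : 0 ≤ 2 * ‖g‖ / min δ 1 * min (dist u s) 1 := by positivity
  rcases lt_or_ge (dist u s) (min δ 1) with hu | hu
  · have := hg u (hu.trans_le (min_le_left _ _))
    rw [Real.dist_eq] at this
    linarith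
  · have hfar : 2 * ‖g‖ ≤ 2 * ‖g‖ / min δ 1 * min (dist u s) 1 := by
      rw [div_mul_eq_mul_div, le_div_iff₀ hδ']
      exact mul_le_mul_of_nonneg_left (le_min hu (min_le_right _ _)) (by positivity)
    have := g.dist_le_two_norm u s
    rw [Real.dist_eq] at this
    linarith

theorem IsLatticeState.eq_eval_of_map_truncDist [PseudoMetricSpace X] {m : (X →ᵇ ℝ) → ℝ}
    (hm : IsLatticeState m) {s : X} (h : m (truncDist s) = 0) (g : X →ᵇ ℝ) : m g = g s := by
  have hle : ∀ ε > 0, |m g - g s| ≤ 0 + ε := fun ε hε => by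
    rw [zero_add]
    obtain ⟨C, hC⟩ := exists_abs_sub_const_le_add_smul_truncDist g s hε
    have := hm.mono hC
    rwa [hm.map_abs, hm.map_sub, hm.map_add, hm.map_smul, h, smul_zero, add_zero,
      hm.map_const, hm.map_const] at this
  exact sub_eq_zero.1 (abs_nonpos_iff.1 (le_of_forall_pos_le_add hle))

theorem continuous_of_forall_continuous_comp {Z : Type*} [TopologicalSpace Z]
    [PseudoMetricSpace X] {φ : Z → X} (h : ∀ x : X →ᵇ ℝ, Continuous (x ∘ φ)) :
    Continuous φ := by
  refine continuous_iff_continuousAt.2 fun z => ?_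
  have hz : Tendsto (fun z' => min (dist (φ z') (φ z)) 1) (𝓝 z) (𝓝 0) := by
    simpa [Function.comp_def] using (h (truncDist (φ z))).tendsto z
  rw [ContinuousAt, tendsto_iff_dist_tendsto_zero]
  refine hz.congr' ?_
  filter_upwards [hz.eventually (gt_mem_nhds one_pos)] with z' hz'
  exact min_eq_left ((min_lt_iff.1 hz').resolve_right (lt_irrefl 1)).le

theorem eq_of_forall_apply_eq_mul_apply [MetricSpace X] {s t : X} {c : ℝ}
    (h : ∀ x : X →ᵇ ℝ, x t = c * x s) : s = t := by
  have hc : c = 1 := by simpa using (h 1).symm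
  have := h (truncDist t)
  rw [hc, one_mul, truncDist_apply, dist_self, min_eq_left zero_le_one, eq_comm] at this
  exact truncDist_eq_zero.1 this

end TruncDist

theorem opNorm_eq_norm_of_apply_eq_mul_comp {X Y : Type*} [TopologicalSpace X]
    [TopologicalSpace Y] {S : (X →ᵇ ℝ) →L[ℝ] (Y →ᵇ ℝ)} {a : Y →ᵇ ℝ} {φ : Y → X}
    (h : ∀ x t, S x t = a t * x (φ t)) : ‖S‖ = ‖a‖ := by
  refine le_antisymm (S.opNorm_le_bound (norm_nonneg _) fun x =>
    (norm_le (by positivity)).2 fun t => ?_) ?_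
  · rw [h, norm_mul]
    exact mul_le_mul (a.norm_coe_le_norm t) (x.norm_coe_le_norm _) (norm_nonneg _) (norm_nonneg _)
  · have ha : S 1 = a := by ext t; simp [h]
    calc ‖a‖ = ‖S 1‖ := by rw [ha]
      _ ≤ ‖S‖ * 1 := S.le_opNorm_of_le ((norm_le zero_le_one).2 fun _ => by simp)
      _ = ‖S‖ := mul_one _

section Representation

variable {X : Type*} [MetricSpace X] {T : (X →ᵇ ℝ) ≃L[ℝ] (X →ᵇ ℝ)}
  (hT : ∀ x y, T (x ⊔ y) = T x ⊔ T y)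
include hT

theorem IsLatticeState.eq_div_of_map_symm_truncDist {m : (X →ᵇ ℝ) → ℝ} (hm : IsLatticeState m)
    {t : X} (h : m (T.symm (truncDist t)) = 0) (x : X →ᵇ ℝ) : m x = T x t / T 1 t := by
  have hT' := map_sup_symm_of_map_sup hT
  have hb := hm.map_one_pos hT'
  have hn := hm.comp_div hT' hb
  have hm_symm (y : X →ᵇ ℝ) : m (T.symm y) = y t * m (T.symm 1) :=
    (div_eq_iff hb.ne').1 (hn.eq_eval_of_map_truncDist (by simp [h]) y)
  have h1 : 1 = T 1 t * m (T.symm 1) := by simpa [hm.map_one] using hm_symm (T 1)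
  calc m x = T x t * m (T.symm 1) := by simpa using hm_symm (T x)
    _ = T x t / T 1 t := by
      rw [eq_div_iff ((isLatticeState_eval t).map_one_pos hT).ne', mul_assoc, mul_comm (m _),
        ← h1, mul_one]

theorem exists_apply_eq_mul_apply (t : X) : ∃ s, ∀ x, T x t = T 1 t * x s := by
  have ht := (isLatticeState_eval t).map_one_pos hT
  have hf : 0 ≤ T.symm (truncDist t) := by
    simpa using Monotone.of_map_sup (map_sup_symm_of_map_sup hT) (truncDist_nonneg t)
  obtain ⟨s, hs⟩ := ((isLatticeState_eval t).comp_div hT ht).exists_eq_eval_of_unique hf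
    (by simp) fun m hm h => funext (hm.eq_div_of_map_symm_truncDist hT h)
  exact ⟨s, fun x => by rw [← hs x, mul_div_cancel₀ _ ht.ne']⟩

theorem exists_continuous_apply_eq_mul_comp :
    ∃ φ : X → X, Continuous φ ∧ ∀ x t, T x t = T 1 t * x (φ t) := by
  choose φ hφ using exists_apply_eq_mul_apply hT
  have ht (t : X) : T 1 t ≠ 0 := ((isLatticeState_eval t).map_one_pos hT).ne'
  refine ⟨φ, continuous_of_forall_continuous_comp fun x => ?_, fun x t => hφ t x⟩
  have hx : x ∘ φ = fun t => T x t / T 1 t :=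
    funext fun t => by rw [hφ t x, mul_div_cancel_left₀ _ (ht t), Function.comp_apply]
  rw [hx]
  exact (T x).continuous.div (T 1).continuous ht

end Representation

/-- **Proposition 6.7.** Let `X` be a metric space. Any lattice isomorphism `T` of
`C_b(X)` is a weighted composition operator: `(T x)(t) = a(t)·x(φ(t))` for a bounded
continuous `a` with `inf a > 0` and a homeomorphism `φ : X → X`; moreover `‖a‖ = ‖T‖`. -/
theorem stmt19 {X : Type*} [MetricSpace X]
    (T : (X →ᵇ ℝ) ≃L[ℝ] (X →ᵇ ℝ))
    (hT : ∀ x y : X →ᵇ ℝ, T (x ⊔ y) = T x ⊔ T y) :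
    ∃ (a : X →ᵇ ℝ) (φ : X ≃ₜ X),
      (∃ c > 0, ∀ t, c ≤ a t) ∧
      (∀ (x : X →ᵇ ℝ) (t : X), T x t = a t * x (φ t)) ∧
      ‖a‖ = ‖(T : (X →ᵇ ℝ) →L[ℝ] (X →ᵇ ℝ))‖ := by
  obtain ⟨φ, hφ_cont, hφ⟩ := exists_continuous_apply_eq_mul_comp hT
  obtain ⟨ψ, hψ_cont, hψ⟩ := exists_continuous_apply_eq_mul_comp (map_sup_symm_of_map_sup hT)
  have hψφ (t : X) : ψ (φ t) = t := eq_of_forall_apply_eq_mul_apply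
    (c := T 1 t * T.symm 1 (φ t)) fun x => by rw [mul_assoc, ← hψ, ← hφ, T.apply_symm_apply]
  have hφψ (t : X) : φ (ψ t) = t := eq_of_forall_apply_eq_mul_apply
    (c := T.symm 1 t * T 1 (ψ t)) fun x => by rw [mul_assoc, ← hφ, ← hψ, T.symm_apply_apply]
  exact ⟨T 1, ⟨⟨φ, ψ, hψφ, hφψ⟩, hφ_cont, hψ_cont⟩, exists_pos_le_map_one hT, hφ,
    (opNorm_eq_norm_of_apply_eq_mul_comp hφ).symm⟩
end
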